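/- arXiv:math/9610215 — 6 statements merged into one kernel-verified Lean document; each statement's English description precedes it below -/
import Mathlib

section
/- If K is a countable compact Hausdorff space, then K is homeomorphic to the ordinal interval [1, ω^β · n] with the order topology, where β is an ordinal and n is the (finite, positive) cardinality of the β-th Cantor–Bendixson derived set K^(β). -/
open Topology Ordinal

/-- The `o`-th Cantor–Bendixson derived set of `A`, obtained by transfinitely
iterating the derived-set operation, with intersections at limit stages. -/
noncomputable def cbIter {X : Type*} [TopologicalSpace X] (A : Set X) (o : Ordinal) : Set X :=
  Ordinal.limitRecOn o A (fun _ S => {x | AccPt x (Filter.principal S)})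
    (fun o _ ih => ⋂ i : {b : Ordinal // b < o}, ih i.1 i.2)

/-!
Induction on `β`. When `K^(β) = {p}` and `β > 0`, the open set `K \ {p}` is a countable disjoint
union of clopen sets `D i` (a countable compact Hausdorff space is zero-dimensional). Each `D i`
misses `K^(β)`, so some derived set of `D i` of order `r < β` is finite and nonempty, and by
induction `D i ≃ [1, γ i]` with `γ i < ω^β`. Laying the pieces end to end sends `D i` onto
`(γ 0 + ⋯ + γ (i-1), γ 0 + ⋯ + γ i]` and `p` to `ω^β`. The partial sums are cofinal in
`ω^β`: for every `b < β` the point `p` is a limit of points of `K^(b)`, so infinitely many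
pieces meet `K^(b)`, and each of them has `γ i ≥ ω^b`. When `K^(β)` has `n` points, a clopen
set isolating one of them splits `K` into copies of `[1, ω^β]` and `[1, ω^β · (n - 1)]`.

Some `K^(β)` is finite and nonempty, for otherwise every level would be nonempty (an infinite
level has an accumulation point, and compactness passes to limit stages), whereas by countability
the derived sets stabilise at a perfect set, which is empty by the Baire category theorem.
-/

open Set Filter Function Order

universe u v

section CantorBendixson

variable {X : Type*} [TopologicalSpace X] {A : Set X}

@[simp] lemma cbIter_zero : cbIter A 0 = A := limitRecOn_zero ..

lemma cbIter_succ (o : Ordinal) : cbIter A (o + 1) = derivedSet (cbIter A o) :=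
  limitRecOn_add_one ..

lemma cbIter_limit {o : Ordinal} (h : IsSuccLimit o) :
    cbIter A o = ⋂ b : {b : Ordinal // b < o}, cbIter A b :=
  limitRecOn_limit _ _ _ _ h

lemma cbIter_preimage_val {U : Set X} (hU : IsOpen U) (o : Ordinal) :
    cbIter ((↑) ⁻¹' A : Set U) o = (↑) ⁻¹' cbIter A o := by
  induction o using limitRecOn with
  | zero => simp
  | add_one o ih =>
    ext x
    simp only [cbIter_succ, ih, mem_preimage, mem_derivedSet, accPt_iff_frequently,
      ← hU.isOpenEmbedding_subtypeVal.map_nhds_eq x, frequently_map, Subtype.coe_ne_coe]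
  | limit o ho ih =>
    rw [cbIter_limit ho, cbIter_limit ho, preimage_iInter]
    exact iInter_congr fun b => ih b.1 b.2

lemma cbIter_univ_subtype {U : Set X} (hU : IsOpen U) (o : Ordinal) :
    cbIter (univ : Set U) o = Subtype.val ⁻¹' cbIter univ o := by
  rw [← cbIter_preimage_val hU, preimage_univ]

variable [T1Space X]

lemma isClosed_cbIter (hA : IsClosed A) (o : Ordinal) : IsClosed (cbIter A o) := by
  induction o using limitRecOn with
  | zero => simpa
  | add_one o ih => rw [cbIter_succ]; exact isClosed_derivedSet _
  | limit o ho ih => rw [cbIter_limit ho]; exact isClosed_iInter fun b => ih b.1 b.2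

lemma antitone_cbIter (hA : IsClosed A) : Antitone (cbIter A) := by
  intro o o' h
  induction o' using limitRecOn with
  | zero => rw [nonpos_iff_eq_zero.1 h]
  | add_one o' ih =>
    rcases h.eq_or_lt with rfl | h
    · rfl
    · rw [cbIter_succ]
      exact ((isClosed_iff_derivedSet_subset _).1 (isClosed_cbIter hA o')).trans
        (ih (lt_add_one_iff.1 h))
  | limit o' ho ih =>
    rcases h.eq_or_lt with rfl | h
    · rfl
    · rw [cbIter_limit ho]
      exact iInter_subset_of_subset ⟨o, h⟩ subset_rfl

lemma cbIter_eq_empty_of_finite (hA : IsClosed A) {b c : Ordinal} (hb : (cbIter A b).Finite)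
    (hbc : b < c) : cbIter A c = ∅ := by
  refine subset_empty_iff.1 ((antitone_cbIter hA (add_one_le_iff.2 hbc)).trans ?_)
  rw [cbIter_succ]
  exact fun x hx => Set.Infinite.of_accPt hx hb

lemma cbIter_nonempty_of_isSuccLimit [CompactSpace X] (hA : IsClosed A) {o : Ordinal}
    (ho : IsSuccLimit o) (h : ∀ b < o, (cbIter A b).Nonempty) : (cbIter A o).Nonempty := by
  have : Nonempty {b : Ordinal // b < o} := ⟨⟨0, ho.bot_lt⟩⟩
  rw [cbIter_limit ho]
  exact IsCompact.nonempty_iInter_of_directed_nonempty_isCompact_isClosed _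
    ((antitone_cbIter hA).comp_monotone (Subtype.mono_coe _)).directed_ge (fun b => h b.1 b.2)
    (fun b => (isClosed_cbIter hA b).isCompact) (fun b => isClosed_cbIter hA b)

lemma exists_cbIter_add_one_eq [Countable X] (hA : IsClosed A) :
    ∃ o : Ordinal.{v}, cbIter A (o + 1) = cbIter A o := by
  by_contra! h
  have hdrop (o : Ordinal.{v}) : ∃ x, x ∈ cbIter A o ∧ x ∉ cbIter A (o + 1) :=
    not_subset.1 fun hsub => h o ((antitone_cbIter hA (lt_add_one o).le).antisymm hsub)
  choose x hx hx' using hdrop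
  refine not_injective_of_ordinal x (.of_lt_imp_ne fun o o' hlt hoo' => ?_)
  exact hx' o (hoo' ▸ antitone_cbIter hA (add_one_le_iff.2 hlt) (hx o'))

end CantorBendixson

lemma Perfect.eq_empty_of_countable {X : Type*} [TopologicalSpace X] [CompactSpace X] [T2Space X]
    [Countable X] {S : Set X} (hS : Perfect S) : S = ∅ := by
  by_contra hne
  have : Nonempty S := (nonempty_iff_ne_empty.2 hne).to_subtype
  have : CompactSpace S := isCompact_iff_compactSpace.1 hS.closed.isCompact
  obtain ⟨y, hy⟩ : ∃ y : S, (interior {y}).Nonempty :=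
    nonempty_interior_of_iUnion_of_closed (fun _ => isClosed_singleton) (iUnion_of_singleton S)
  obtain ⟨V, hV, hVy⟩ :=
    isOpen_induced_iff.1 (hy.subset_singleton_iff.1 interior_subset ▸ isOpen_interior)
  have hyV : (y : X) ∈ V := show y ∈ (↑) ⁻¹' V by rw [hVy]; rfl
  obtain ⟨z, ⟨hzV, hzS⟩, hzy⟩ := preperfect_iff_nhds.1 hS.acc y y.2 V (hV.mem_nhds hyV)
  have hz : (⟨z, hzS⟩ : S) ∈ (↑) ⁻¹' V := hzV
  rw [hVy] at hz
  exact hzy (congrArg Subtype.val hz)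

theorem exists_cbIter_finite_nonempty {X : Type*} [TopologicalSpace X] [CompactSpace X]
    [T2Space X] [Countable X] [Nonempty X] :
    ∃ β : Ordinal.{v}, (cbIter (univ : Set X) β).Finite ∧
      (cbIter (univ : Set X) β).Nonempty := by
  by_contra! h
  obtain ⟨o, ho⟩ := exists_cbIter_add_one_eq (isClosed_univ (X := X))
  suffices ∀ o : Ordinal.{v}, (cbIter (univ : Set X) o).Nonempty by
    refine (this o).ne_empty (Perfect.eq_empty_of_countable ?_)
    exact perfect_iff_eq_derivedSet.2 (by rw [← cbIter_succ, ho])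
  intro o
  induction o using limitRecOn with
  | zero => simp
  | add_one o ih =>
    rw [cbIter_succ]
    exact Set.Infinite.exists_accPt_principal fun hfin => ih.ne_empty (h o hfin)
  | limit o ho ih => exact cbIter_nonempty_of_isSuccLimit isClosed_univ ho ih

lemma Set.ncard_preimage_val {α : Type*} (s t : Set α) :
    (Subtype.val ⁻¹' t : Set s).ncard = (s ∩ t).ncard := by
  rw [← Subtype.image_preimage_coe, ncard_image_of_injective _ Subtype.val_injective]

theorem IsOpen.exists_iUnion_isClopen_pairwiseDisjoint {X : Type*} [TopologicalSpace X]
    [CompactSpace X] [T2Space X] [TotallyDisconnectedSpace X] [Countable X] {U : Set X}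
    (hU : IsOpen U) :
    ∃ D : ℕ → Set X, (∀ i, IsClopen (D i)) ∧ Pairwise (Disjoint on D) ∧
      ⋃ i, D i = U := by
  rcases isEmpty_or_nonempty X with hX | hX
  · exact ⟨fun _ => ∅, fun _ => isClopen_empty, fun _ _ _ => disjoint_bot_left,
      Subsingleton.elim _ _⟩
  have hW (x : X) : ∃ W, IsClopen W ∧ W ⊆ U ∧ (x ∈ U → x ∈ W) := by
    by_cases hx : x ∈ U
    · obtain ⟨W, hW, hxW, hWU⟩ := compact_exists_isClopen_in_isOpen hU hx
      exact ⟨W, hW, hWU, fun _ => hxW⟩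
    · exact ⟨∅, isClopen_empty, empty_subset U, (absurd · hx)⟩
  choose W hW hWU hxW using hW
  obtain ⟨e, he⟩ := exists_surjective_nat X
  refine ⟨disjointed (W ∘ e), fun i => ?_, disjoint_disjointed _, ?_⟩
  · rw [disjointed_eq_inter_compl]
    exact (hW _).inter ((finite_lt_nat i).isClopen_biInter fun j _ => (hW _).compl)
  · rw [iUnion_disjointed]
    refine (iUnion_subset fun i => hWU _).antisymm fun x hx => ?_
    obtain ⟨i, rfl⟩ := he x
    exact mem_iUnion_of_mem i (hxW _ hx)

lemma Set.Finite.exists_isClopen_inter_eq_singleton {X : Type*} [TopologicalSpace X]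
    [CompactSpace X] [T2Space X] [TotallyDisconnectedSpace X] {S : Set X} (hS : S.Finite) {p : X}
    (hp : p ∈ S) : ∃ V, IsClopen V ∧ S ∩ V = {p} := by
  obtain ⟨V, hV, hpV, hVS⟩ := exists_clopen_of_closed_subset_open isClosed_singleton
    (hS.sdiff (t := {p})).isClosed.isOpen_compl
    (singleton_subset_iff.2 fun h : p ∈ S \ {p} => h.2 rfl)
  refine ⟨V, hV, subset_antisymm ?_ (singleton_subset_iff.2 ⟨hp, hpV rfl⟩)⟩
  exact fun x ⟨hxS, hxV⟩ => by_contra fun hxp => hVS hxV ⟨hxS, hxp⟩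

lemma Monotone.iUnion_Ioc_map_succ_eq_Ioo {β : Type*} [LinearOrder β] {s : ℕ → β}
    (hs : Monotone s) {a : β} (hlt : ∀ i, s i < a) (hcofinal : ∀ c < a, ∃ i, c < s i) :
    ⋃ i, Ioc (s i) (s (i + 1)) = Ioo (s 0) a := by
  refine subset_antisymm (iUnion_subset fun i y hy => ⟨(hs (Nat.zero_le i)).trans_lt hy.1,
    hy.2.trans_lt (hlt _)⟩) fun y hy => ?_
  obtain ⟨n, hn⟩ := hcofinal y hy.2
  have hy' : y ∈ ⋃ i ∈ Ico 0 n, Ioc (s i) (s (succ i)) := by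
    rw [hs.biUnion_Ico_Ioc_map_succ]
    exact ⟨hy.1, hn.le⟩
  obtain ⟨i, -, hi⟩ := mem_iUnion₂.1 hy'
  exact mem_iUnion_of_mem i hi

namespace Ordinal

lemma continuous_add_left (a : Ordinal.{u}) : Continuous (a + ·) :=
  (Order.isNormal_iff_strictMono_and_continuous.1 (isNormal_add_right a)).2

lemma Icc_one_eq_Ioc_zero (a : Ordinal.{u}) : Icc 1 a = Ioc 0 a := by
  rw [← zero_add 1, ← Order.succ_eq_add_one, Icc_succ_left_eq_Ioc]

lemma image_add_Ioc_zero (a b : Ordinal.{u}) : (a + ·) '' Ioc 0 b = Ioc a (a + b) := by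
  refine subset_antisymm ?_ fun y ⟨hay, hyb⟩ => ⟨y - a, ⟨?_, sub_le.2 hyb⟩,
    Ordinal.add_sub_cancel_of_le hay.le⟩
  · rintro _ ⟨z, ⟨hz, hzb⟩, rfl⟩
    exact ⟨lt_add_of_pos_right a hz, add_le_add_right hzb a⟩
  · exact pos_iff_ne_zero.2 (Ordinal.sub_ne_zero_iff_lt.2 hay)

def partialSum (γ : ℕ → Ordinal.{u}) : ℕ → Ordinal.{u}
  | 0 => 0
  | n + 1 => partialSum γ n + γ n

variable {γ : ℕ → Ordinal.{u}}

lemma monotone_partialSum (γ : ℕ → Ordinal.{u}) : Monotone (partialSum γ) :=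
  monotone_nat_of_le_succ fun _ => le_self_add

lemma partialSum_lt_omega0_opow {β : Ordinal.{u}} (h : ∀ i, γ i < ω ^ β) (n : ℕ) :
    partialSum γ n < ω ^ β := by
  induction n with
  | zero => exact opow_pos β omega0_pos
  | succ n ih => exact isPrincipal_add_omega0_opow β ih (h n)

lemma exists_mul_le_partialSum {δ : Ordinal.{u}} (h : ∃ᶠ i in atTop, δ ≤ γ i) (m : ℕ) :
    ∃ n, δ * m ≤ partialSum γ n := by
  induction m with
  | zero => exact ⟨0, by simp⟩
  | succ m ih =>
    obtain ⟨n, hn⟩ := ih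
    obtain ⟨j, hnj, hj⟩ := frequently_atTop.1 h n
    refine ⟨j + 1, ?_⟩
    calc δ * ↑(m + 1) = δ * m + δ := by rw [Nat.cast_succ, mul_add_one]
      _ ≤ partialSum γ j + γ j := add_le_add (hn.trans (monotone_partialSum γ hnj)) hj

end Ordinal

lemma notMem_of_iUnion_eq_compl_singleton {X ι : Type*} {p : X} {D : ι → Set X}
    (hcover : ⋃ i, D i = {p}ᶜ) (i : ι) : p ∉ D i :=
  fun hp => hcover.subset (mem_iUnion_of_mem i hp) rfl

section Gluing

variable {X : Type*} [TopologicalSpace X]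

lemma Continuous.nonempty_homeomorph_Icc [CompactSpace X] {g : X → Ordinal.{v}} {α : Ordinal.{v}}
    (hg : Continuous g) (hinj : Injective g) (hrange : range g = Icc 1 α) :
    Nonempty (X ≃ₜ Icc 1 α) :=
  ⟨(hg.isClosedEmbedding hinj).isEmbedding.toHomeomorph.trans (.setCongr hrange)⟩

lemma continuousOn_injOn_image_eq_Ioc {V : Set X} {g : X → Ordinal.{v}} {c γ : Ordinal.{v}}
    (e : V ≃ₜ Icc 1 γ) (hg : ∀ x : V, g x = c + e x) :
    ContinuousOn g V ∧ InjOn g V ∧ g '' V = Ioc c (c + γ) := by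
  have hrestrict : V.domRestrict g = (c + ·) ∘ Subtype.val ∘ e := funext hg
  refine ⟨continuousOn_iff_continuous_domRestrict.2 ?_, injOn_iff_injective.2 ?_, ?_⟩
  · rw [hrestrict]
    exact (continuous_add_left c).comp (continuous_subtype_val.comp e.continuous)
  · rw [hrestrict]
    exact (add_right_injective c).comp (Subtype.val_injective.comp e.injective)
  · rw [← range_domRestrict, hrestrict, range_comp, range_comp, e.surjective.range_eq,
      image_univ, Subtype.range_coe, Icc_one_eq_Ioc_zero, image_add_Ioc_zero]

theorem IsClopen.nonempty_homeomorph_Icc_add [CompactSpace X] {U : Set X} (hU : IsClopen U)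
    {a b : Ordinal.{v}} (e₁ : U ≃ₜ Icc 1 a) (e₂ : (Uᶜ : Set X) ≃ₜ Icc 1 b) :
    Nonempty (X ≃ₜ Icc 1 (a + b)) := by
  classical
  let g (x : X) : Ordinal.{v} := if h : x ∈ U then e₁ ⟨x, h⟩ else a + e₂ ⟨x, h⟩
  obtain ⟨hcont₁, hinj₁, himage₁⟩ :=
    continuousOn_injOn_image_eq_Ioc e₁ (g := g) (c := 0) fun x => by simp [g, x.2]
  obtain ⟨hcont₂, hinj₂, himage₂⟩ :=
    continuousOn_injOn_image_eq_Ioc e₂ (g := g) (c := a) fun x => dif_neg x.2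
  rw [zero_add] at himage₁
  refine Continuous.nonempty_homeomorph_Icc (g := g) ?_ ?_ ?_
  · rw [← continuousOn_univ, ← union_compl_self U]
    exact hcont₁.union_of_isOpen hcont₂ hU.isOpen hU.compl.isOpen
  · rw [← injOn_univ, ← union_compl_self U]
    refine (injOn_union disjoint_compl_right).2 ⟨hinj₁, hinj₂, fun x hx y hy => ?_⟩
    have hgx : g x ≤ a := (himage₁ ▸ mem_image_of_mem g hx : g x ∈ Ioc 0 a).2
    exact (hgx.trans_lt (himage₂ ▸ mem_image_of_mem g hy : g y ∈ Ioc a (a + b)).1).ne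
  · rw [← image_univ, ← union_compl_self U, image_union, himage₁, himage₂,
      Ioc_union_Ioc_eq_Ioc (zero_le (a := a)) le_self_add, Icc_one_eq_Ioc_zero]

lemma compl_biUnion_lt_mem_nhds {p : X} {D : ℕ → Set X} (hD : ∀ i, IsClosed (D i))
    (hcover : ⋃ i, D i = {p}ᶜ) (i : ℕ) : (⋃ j < i, D j)ᶜ ∈ 𝓝 p :=
  ((finite_lt_nat i).isClosed_biUnion fun j _ => hD j).isOpen_compl.mem_nhds
    (by simp [notMem_of_iUnion_eq_compl_singleton hcover])

theorem nonempty_homeomorph_Icc_of_image_eq_Ioc [CompactSpace X] {p : X} {D : ℕ → Set X}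
    (hD : ∀ i, IsClopen (D i)) (hcover : ⋃ i, D i = {p}ᶜ) {s : ℕ → Ordinal.{v}}
    (hs : Monotone s) (hs0 : s 0 = 0) {α : Ordinal.{v}} (hlt : ∀ i, s i < α)
    (hcofinal : ∀ c < α, ∃ i, c < s i)
    {g : X → Ordinal.{v}} (hgp : g p = α) (hcont : ∀ i, ContinuousOn g (D i))
    (hinj : ∀ i, InjOn g (D i)) (himage : ∀ i, g '' D i = Ioc (s i) (s (i + 1))) :
    Nonempty (X ≃ₜ Icc 1 α) := by
  have hmem {x : X} {i : ℕ} (hx : x ∈ D i) : g x ∈ Ioc (s i) (s (i + 1)) :=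
    himage i ▸ mem_image_of_mem g hx
  have hpiece {x : X} (hx : x ≠ p) : ∃ i, x ∈ D i := mem_iUnion.1 (hcover ▸ hx)
  have hg_lt {x : X} (hx : x ≠ p) : g x < α :=
    let ⟨i, hi⟩ := hpiece hx; (hmem hi).2.trans_lt (hlt _)
  refine Continuous.nonempty_homeomorph_Icc (g := g) ?_ ?_ ?_
  · have hcont_p : ContinuousAt g p := by
      refine tendsto_order.2 ⟨fun c hc => ?_, fun c hc => Eventually.of_forall fun z => ?_⟩
      · obtain ⟨i, hi⟩ := hcofinal c (hgp ▸ hc)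
        filter_upwards [compl_biUnion_lt_mem_nhds (fun j => (hD j).isClosed) hcover i] with z hz
        rcases eq_or_ne z p with rfl | hzp
        · exact hc
        obtain ⟨j, hj⟩ := hpiece hzp
        have hij : i ≤ j := not_lt.1 fun hji => hz (mem_biUnion hji hj)
        exact hi.trans ((hs hij).trans_lt (hmem hj).1)
      · rcases eq_or_ne z p with rfl | hzp
        · exact hc
        · exact (hg_lt hzp).trans (hgp ▸ hc)
    refine continuous_iff_continuousAt.2 fun x => ?_
    rcases eq_or_ne x p with rfl | hx
    · exact hcont_p
    · obtain ⟨i, hi⟩ := hpiece hx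
      exact (hcont i).continuousAt ((hD i).isOpen.mem_nhds hi)
  · intro x y hxy
    by_cases hx : x = p <;> by_cases hy : y = p
    · rw [hx, hy]
    · rw [hx, hgp] at hxy
      exact absurd hxy.symm (hg_lt hy).ne
    · rw [hy, hgp] at hxy
      exact absurd hxy (hg_lt hx).ne
    obtain ⟨i, hi⟩ := hpiece hx
    obtain ⟨j, hj⟩ := hpiece hy
    obtain rfl : i = j :=
      hs.pairwise_disjoint_on_Ioc_succ.eq (not_disjoint_iff.2 ⟨g x, hmem hi, hxy ▸ hmem hj⟩)
    exact hinj i hi hj hxy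
  · rw [← image_univ, ← union_compl_self {p}, image_union, image_singleton, ← hcover,
      image_iUnion, funext himage, hs.iUnion_Ioc_map_succ_eq_Ioo hlt hcofinal, hgp,
      singleton_union, Ioo_insert_right (hlt 0), hs0, Icc_one_eq_Ioc_zero]

theorem nonempty_homeomorph_Icc_of_clopen_partition [CompactSpace X] {p : X} {D : ℕ → Set X}
    (hD : ∀ i, IsClopen (D i)) (hdisj : Pairwise (Disjoint on D)) (hcover : ⋃ i, D i = {p}ᶜ)
    {γ : ℕ → Ordinal.{v}} (e : ∀ i, D i ≃ₜ Icc 1 (γ i)) {α : Ordinal.{v}}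
    (hlt : ∀ i, partialSum γ i < α) (hcofinal : ∀ c < α, ∃ i, c < partialSum γ i) :
    Nonempty (X ≃ₜ Icc 1 α) := by
  classical
  let g (x : X) : Ordinal.{v} :=
    if h : ∃ i, x ∈ D i then partialSum γ h.choose + e h.choose ⟨x, h.choose_spec⟩ else α
  have hgp : g p = α := dif_neg fun ⟨i, hi⟩ => notMem_of_iUnion_eq_compl_singleton hcover i hi
  have hpiece (i : ℕ) := continuousOn_injOn_image_eq_Ioc (e i) (g := g) (c := partialSum γ i)
    fun x => by
      have key (j : ℕ) (hj : (x : X) ∈ D j) :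
          partialSum γ j + (e j ⟨x, hj⟩ : Ordinal) = partialSum γ i + e i x := by
        obtain rfl : j = i := hdisj.eq (not_disjoint_iff.2 ⟨x, hj, x.2⟩)
        rfl
      exact (dif_pos ⟨i, x.2⟩).trans (key _ _)
  choose hcont hinj himage using hpiece
  exact nonempty_homeomorph_Icc_of_image_eq_Ioc hD hcover (monotone_partialSum γ) rfl hlt hcofinal
    hgp hcont hinj himage

end Gluing

lemma frequently_cbIter_inter_nonempty {X : Type*} [TopologicalSpace X] {A : Set X} {p : X}
    {D : ℕ → Set X} (hD : ∀ i, IsClosed (D i)) (hcover : ⋃ i, D i = {p}ᶜ)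
    {b : Ordinal.{v}} (hp : p ∈ cbIter A (b + 1)) :
    ∃ᶠ i in atTop, (cbIter A b ∩ D i).Nonempty := by
  refine frequently_atTop.2 fun i => ?_
  rw [cbIter_succ] at hp
  obtain ⟨x, ⟨hxN, hxb⟩, hxp⟩ :=
    accPt_iff_nhds.1 hp _ (compl_biUnion_lt_mem_nhds hD hcover i)
  obtain ⟨j, hj⟩ := mem_iUnion.1 (hcover ▸ hxp : x ∈ ⋃ j, D j)
  exact ⟨j, not_lt.1 fun hji => hxN (mem_biUnion hji hj), x, hxb, hj⟩

section Classification

def ClassifiedAtLevel (β : Ordinal.{v}) : Prop :=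
  ∀ (K : Type u) [TopologicalSpace K] [CompactSpace K] [T2Space K] [Countable K] (n : ℕ),
    0 < n → (cbIter (univ : Set K) β).ncard = n → Nonempty (K ≃ₜ Icc 1 (ω ^ β * n))

variable {K : Type u} [TopologicalSpace K] [CompactSpace K] [T2Space K] [Countable K]
  {β : Ordinal.{v}}

lemma exists_homeomorph_Icc_of_isClopen (hIH : ∀ b < β, ClassifiedAtLevel.{u} b) {p : K}
    (hp : cbIter univ β = {p}) {D : Set K} (hD : IsClopen D) (hpD : p ∉ D) :
    ∃ γ < ω ^ β, Nonempty (D ≃ₜ Icc 1 γ) ∧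
      ∀ b, (cbIter univ b ∩ D).Nonempty → ω ^ b ≤ γ := by
  rcases D.eq_empty_or_nonempty with rfl | hne
  · have : IsEmpty (Icc (1 : Ordinal.{v}) 0) := isEmpty_coe_sort.2 (Icc_eq_empty_of_lt zero_lt_one)
    exact ⟨0, opow_pos β omega0_pos, ⟨.empty⟩, by simp⟩
  have : CompactSpace D := isCompact_iff_compactSpace.1 hD.isClosed.isCompact
  have : Nonempty D := hne.to_subtype
  obtain ⟨r, hfin, hrne⟩ := exists_cbIter_finite_nonempty (X := D)
  have hr : r < β := by
    by_contra! hβr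
    obtain ⟨⟨x, hxD⟩, hx⟩ := hrne
    rw [cbIter_univ_subtype hD.isOpen, mem_preimage] at hx
    have hxp : x ∈ ({p} : Set K) := hp ▸ antitone_cbIter isClosed_univ hβr hx
    exact hpD (eq_of_mem_singleton hxp ▸ hxD)
  have hn : 0 < (cbIter (univ : Set D) r).ncard := (ncard_pos hfin).2 hrne
  obtain ⟨e⟩ := hIH r hr D _ hn rfl
  refine ⟨_, opow_mul_lt_opow (natCast_lt_omega0 _) hr, ⟨e⟩, fun b ⟨x, hxb, hxD⟩ => ?_⟩
  have hbr : b ≤ r := by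
    by_contra! hrb
    have hx : (⟨x, hxD⟩ : D) ∈ cbIter univ b := by rwa [cbIter_univ_subtype hD.isOpen]
    rwa [cbIter_eq_empty_of_finite isClosed_univ hfin hrb] at hx
  exact (opow_le_opow_right omega0_pos hbr).trans (le_mul_left _ (by exact_mod_cast hn))

theorem nonempty_homeomorph_Icc_of_cbIter_eq_singleton (hIH : ∀ b < β, ClassifiedAtLevel.{u} b)
    {p : K} (hp : cbIter univ β = {p}) : Nonempty (K ≃ₜ Icc 1 (ω ^ β)) := by
  rcases eq_or_ne β 0 with rfl | hβ
  · rw [cbIter_zero] at hp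
    have : Unique K := ⟨⟨p⟩, fun x => eq_of_mem_singleton (hp ▸ mem_univ x)⟩
    rw [opow_zero, Icc_self]
    exact ⟨.homeomorphOfUnique _ _⟩
  obtain ⟨D, hD, hdisj, hcover⟩ :=
    (isOpen_compl_singleton (x := p)).exists_iUnion_isClopen_pairwiseDisjoint
  choose γ hγ e hγb using fun i => exists_homeomorph_Icc_of_isClopen hIH hp (hD i)
    (notMem_of_iUnion_eq_compl_singleton hcover i)
  refine nonempty_homeomorph_Icc_of_clopen_partition hD hdisj hcover (fun i => (e i).some)
    (partialSum_lt_omega0_opow hγ) fun c hc => ?_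
  obtain ⟨b, hb, m, hcm⟩ := (lt_omega0_opow hβ).1 hc
  have hpb : p ∈ cbIter univ (b + 1) := antitone_cbIter isClosed_univ (add_one_le_iff.2 hb)
    (hp ▸ mem_singleton p)
  obtain ⟨i, hi⟩ := exists_mul_le_partialSum ((frequently_cbIter_inter_nonempty
    (fun i => (hD i).isClosed) hcover hpb).mono fun i => hγb i b) m
  exact ⟨i, hcm.trans_le hi⟩

theorem classifiedAtLevel_of_singleton
    (h : ∀ (K : Type u) [TopologicalSpace K] [CompactSpace K] [T2Space K] [Countable K] (p : K),
      cbIter univ β = {p} → Nonempty (K ≃ₜ Icc 1 (ω ^ β))) :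
    ClassifiedAtLevel.{u} β := by
  intro K _ _ _ _ n hn hK
  induction n generalizing K with
  | zero => exact absurd hn (lt_irrefl 0)
  | succ m ih =>
    set S := cbIter (univ : Set K) β
    rcases m.eq_zero_or_pos with rfl | hm
    · obtain ⟨p, hp⟩ := ncard_eq_one.1 hK
      rw [zero_add, Nat.cast_one, mul_one]
      exact h K p hp
    obtain ⟨p, hpS⟩ := nonempty_of_ncard_ne_zero (by rw [hK]; omega)
    obtain ⟨V, hV, hSV⟩ :=
      (finite_of_ncard_pos (hK ▸ hn)).exists_isClopen_inter_eq_singleton hpS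
    have hpV : p ∈ V := (hSV.symm ▸ mem_singleton p : p ∈ S ∩ V).2
    have : CompactSpace V := isCompact_iff_compactSpace.1 hV.isClosed.isCompact
    have : CompactSpace ↥Vᶜ := isCompact_iff_compactSpace.1 hV.compl.isClosed.isCompact
    obtain ⟨eV⟩ := h V ⟨p, hpV⟩ (by
      rw [cbIter_univ_subtype hV.isOpen, ← Subtype.preimage_coe_self_inter, inter_comm, hSV]
      ext x
      simp [Subtype.ext_iff])
    obtain ⟨eVc⟩ := ih (Vᶜ : Set K) hm (by
      rw [cbIter_univ_subtype hV.compl.isOpen, ncard_preimage_val, inter_comm, ← sdiff_eq,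
        ← sdiff_self_inter, hSV, ncard_sdiff_singleton_of_mem hpS, hK, Nat.add_sub_cancel])
    have := hV.compl.nonempty_homeomorph_Icc_add eVc
      ((Homeomorph.setCongr (compl_compl V)).trans eV)
    rwa [Nat.cast_succ, mul_add_one]

theorem classifiedAtLevel (β : Ordinal.{v}) : ClassifiedAtLevel.{u} β := by
  induction β using WellFoundedLT.induction with
  | _ β ih => exact classifiedAtLevel_of_singleton fun K _ _ _ _ _ hp =>
      nonempty_homeomorph_Icc_of_cbIter_eq_singleton ih hp

end Classification

/-- **Mazurkiewicz–Sierpiński**: a countable compact Hausdorff space is homeomorphic to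
`[1, ω^β · n]` where `n` is the (finite, positive) cardinality of the `β`-th derived set. -/
theorem stmt0 (K : Type*) [TopologicalSpace K] [CompactSpace K] [T2Space K]
    [Countable K] [Nonempty K] :
    ∃ (β : Ordinal) (n : ℕ), 0 < n ∧ (cbIter (Set.univ : Set K) β).ncard = n ∧
      Nonempty (K ≃ₜ ↥(Set.Icc (1 : Ordinal) (ω ^ β * n))) := by
  obtain ⟨β, hfin, hne⟩ := exists_cbIter_finite_nonempty (X := K)
  have hn := (ncard_pos hfin).2 hne
  exact ⟨β, _, hn, rfl, classifiedAtLevel β K _ hn rfl⟩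
end

section
/- Let M be a set of mutually singular probability measures on a measurable space, let ε > 0, and let (μ_n) be a sequence of finite convex combinations of measures in M with associated pairwise disjoint measurable sets (A_n) satisfying: (1) μ_n(A_n) ≥ ε for all n; (2) for each n, either there is a unique n′ with μ_n ≻′ μ_{n′}, or μ_n(A_{n′}) = 0 for all n′ ≠ n; (3) whenever it is not the case that μ_n ≻ μ_m (n ≠ m), μ_n(A_m) = 0. Then for any finitely supported sequence of scalars (c_n), ‖Σ c_n μ_n‖ ≥ (2ε/3) Σ |c_n|, where ‖·‖ is the total variation norm. Consequently (μ_n) is equivalent to the unit vector basis of ℓ¹. -/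
open MeasureTheory ENNReal

/-- The relation `≻′` of the paper for the family `(μ n, A n)`: `μ n ≻′ μ n'` iff there is
a scalar `a ∈ (0, μ n (A n) / (2 · μ n' (A n'))]` with
`(μ n)|_{∪_{m ≠ n} A m} = a • (μ n')|_{∪_{m ≠ n} A m}` and `μ n' (A n) = 0`. -/
def wsucc {Ω : Type*} [MeasurableSpace Ω] (μ : ℕ → Measure Ω) (A : ℕ → Set Ω)
    (n n' : ℕ) : Prop :=
  ∃ a : ℝ≥0∞, 0 < a ∧ a ≤ μ n (A n) / (2 * μ n' (A n')) ∧
    (μ n).restrict (⋃ m ∈ {m : ℕ | m ≠ n}, A m)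
      = a • (μ n').restrict (⋃ m ∈ {m : ℕ | m ≠ n}, A m) ∧
    μ n' (A n) = 0

/-!
Write `ν = ∑ c_n μ_n` and `v_m = ν(A_m)`. Three facts about `≻′` drive the proof:
`μ_n(A_m) ≠ 0` exactly when `n ≻′* m` (reflexive-transitive closure), `≻′` is acyclic and
deterministic, and along a chain `n ≻′* p ≻′ m` the ratio `μ_n(A_m) / μ_n(A_p)` equals
`r_p = μ_p(A_m) / μ_p(A_p) ≤ 1/2`. Hence `v_m = c_m μ_m(A_m) + ∑ r_p v_p`, the sum running over
the predecessors `p ≻′ m` reached from the support of `c`. Each `p` has a single successor, so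
summing `|c_m| μ_m(A_m) ≤ |v_m| + ∑ |v_p| / 2` over `m` gives `ε ∑ |c_m| ≤ (3/2) ‖ν‖`, the sets
`A_m` being disjoint.
-/

open Relation

lemma MeasureTheory.Measure.apply_eq_mul_of_restrict_eq {α : Type*} [MeasurableSpace α]
    {ν ν' : Measure α} {S E : Set α} {a : ℝ≥0∞} (h : ν.restrict S = a • ν'.restrict S)
    (hE : E ⊆ S) : ν E = a * ν' E := by
  rw [← Measure.restrict_eq_self ν hE, h, Measure.smul_apply, Measure.restrict_eq_self _ hE,
    smul_eq_mul]

lemma MeasureTheory.SignedMeasure.sum_abs_apply_le_totalVariation {α ι : Type*}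
    [MeasurableSpace α] (ν : SignedMeasure α) {A : ι → Set α} (hmeas : ∀ i, MeasurableSet (A i))
    (hdisj : Pairwise (Function.onFun Disjoint A)) (t : Finset ι) :
    ∑ i ∈ t, |ν (A i)| ≤ ν.totalVariation.real Set.univ :=
  calc ∑ i ∈ t, |ν (A i)| ≤ ∑ i ∈ t, ν.totalVariation.real (A i) :=
        Finset.sum_le_sum fun i _ => ν.norm_le_totalVariation (A i)
    _ = ν.totalVariation.real (⋃ i ∈ t, A i) :=
        (measureReal_biUnion_finset (hdisj.set_pairwise _) fun i _ => hmeas i).symm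
    _ ≤ ν.totalVariation.real Set.univ := measureReal_mono (Set.subset_univ _)

lemma sum_abs_le_of_eq_add_sum {v u : ℕ → ℝ} {r : ℕ → ℕ → ℝ} {Q : ℕ → Finset ℕ} {T : ℝ}
    (s : Finset ℕ) (hQ : Pairwise (Function.onFun Disjoint Q))
    (hr : ∀ m, ∀ p ∈ Q m, |r p m| ≤ 1 / 2)
    (hv : ∀ m ∈ s, v m = u m + ∑ p ∈ Q m, r p m * v p)
    (hT : ∀ t : Finset ℕ, ∑ m ∈ t, |v m| ≤ T) :
    ∑ m ∈ s, |u m| ≤ 3 / 2 * T := by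
  have hu : ∀ m ∈ s, |u m| ≤ |v m| + ∑ p ∈ Q m, |v p| / 2 := fun m hm =>
    calc |u m| = |v m - ∑ p ∈ Q m, r p m * v p| := by rw [hv m hm, add_sub_cancel_right]
      _ ≤ |v m| + ∑ p ∈ Q m, |r p m * v p| :=
        (abs_sub _ _).trans (add_le_add_right (Finset.abs_sum_le_sum_abs _ _) _)
      _ ≤ |v m| + ∑ p ∈ Q m, |v p| / 2 := by
        gcongr with p hp
        rw [abs_mul]
        linarith [mul_le_mul_of_nonneg_right (hr m p hp) (abs_nonneg (v p))]
  calc ∑ m ∈ s, |u m| ≤ ∑ m ∈ s, (|v m| + ∑ p ∈ Q m, |v p| / 2) := Finset.sum_le_sum hu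
    _ = ∑ m ∈ s, |v m| + (∑ p ∈ s.biUnion Q, |v p|) / 2 := by
      rw [Finset.sum_add_distrib, Finset.sum_div, Finset.sum_biUnion (hQ.set_pairwise _)]
    _ ≤ T + T / 2 := by gcongr <;> exact hT _
    _ = 3 / 2 * T := by ring

section wsucc

variable {Ω : Type*} [MeasurableSpace Ω] {μ : ℕ → Measure Ω} {A : ℕ → Set Ω} {n m p : ℕ}

lemma wsucc.apply_eq_zero (h : wsucc μ A p m) : μ m (A p) = 0 := by
  obtain ⟨-, -, -, -, h0⟩ := h
  exact h0

lemma wsucc.ne (hp : μ p (A p) ≠ 0) (h : wsucc μ A p m) : m ≠ p := by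
  rintro rfl
  exact hp h.apply_eq_zero

lemma wsucc.exists_apply_eq_mul (h : wsucc μ A p m) :
    ∃ a ≠ 0, ∀ j ≠ p, μ p (A j) = a * μ m (A j) := by
  obtain ⟨a, ha, -, hres, -⟩ := h
  exact ⟨a, ha.ne', fun j hj =>
    Measure.apply_eq_mul_of_restrict_eq hres (Set.subset_biUnion_of_mem (u := A) hj)⟩

lemma wsucc.two_mul_apply_le (hp : μ p (A p) ≠ 0) (h : wsucc μ A p m) :
    2 * μ p (A m) ≤ μ p (A p) := by
  have hmp := h.ne hp
  obtain ⟨a, -, hle, hres, -⟩ := h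
  rw [Measure.apply_eq_mul_of_restrict_eq hres (Set.subset_biUnion_of_mem (u := A) hmp),
    mul_left_comm]
  exact ENNReal.mul_le_of_le_div hle

lemma apply_ne_zero_of_reflTransGen_wsucc (hA : ∀ n, μ n (A n) ≠ 0)
    (h : ReflTransGen (wsucc μ A) n m) : μ n (A m) ≠ 0 := by
  induction h using ReflTransGen.head_induction_on with
  | refl => exact hA m
  | @head n n' hnn' _ ih =>
    rcases eq_or_ne m n with rfl | hmn
    · exact hA m
    obtain ⟨a, ha, hnA⟩ := hnn'.exists_apply_eq_mul
    rw [hnA m hmn]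
    exact mul_ne_zero ha ih

lemma apply_ne_zero_iff_reflTransGen_wsucc (hA : ∀ n, μ n (A n) ≠ 0)
    (h3 : ∀ n m, n ≠ m → ¬ TransGen (wsucc μ A) n m → μ n (A m) = 0) :
    μ n (A m) ≠ 0 ↔ ReflTransGen (wsucc μ A) n m := by
  refine ⟨fun h => ?_, apply_ne_zero_of_reflTransGen_wsucc hA⟩
  rcases eq_or_ne n m with rfl | hnm
  · exact ReflTransGen.refl
  · exact (not_not.1 (mt (h3 n m hnm) h)).to_reflTransGen

lemma wsucc.not_reflTransGen (hA : ∀ n, μ n (A n) ≠ 0) (h : wsucc μ A p m) :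
    ¬ ReflTransGen (wsucc μ A) m p :=
  fun hmp => apply_ne_zero_of_reflTransGen_wsucc hA hmp h.apply_eq_zero

lemma wsucc_rightUnique (hA : ∀ n, μ n (A n) ≠ 0)
    (h2 : ∀ n, (∃! n', wsucc μ A n n') ∨ (∀ n', n' ≠ n → μ n (A n') = 0)) :
    Relator.RightUnique (wsucc μ A) := by
  intro p m m' hm hm'
  rcases h2 p with ⟨q, -, hq⟩ | hzero
  · exact (hq m hm).trans (hq m' hm').symm
  · exact absurd (hzero m (hm.ne (hA p))) (apply_ne_zero_of_reflTransGen_wsucc hA (.single hm))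

lemma eq_of_wsucc_of_reflTransGen (hA : ∀ n, μ n (A n) ≠ 0)
    (hU : Relator.RightUnique (wsucc μ A)) {p' : ℕ}
    (hnp : ReflTransGen (wsucc μ A) n p) (hnp' : ReflTransGen (wsucc μ A) n p')
    (hpm : wsucc μ A p m) (hp'm : wsucc μ A p' m) : p = p' := by
  wlog hpp' : ReflTransGen (wsucc μ A) p p' generalizing p p'
  · exact (this hnp' hnp hp'm hpm ((hnp.total_of_right_unique hU hnp').resolve_left hpp')).symm
  rcases hpp'.cases_head with rfl | ⟨q, hpq, hqp'⟩
  · rfl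
  · exact absurd (hU hpm hpq ▸ hqp') (hp'm.not_reflTransGen hA)

lemma apply_mul_apply_eq_of_wsucc (hA : ∀ n, μ n (A n) ≠ 0)
    (hnp : ReflTransGen (wsucc μ A) n p) (hpm : wsucc μ A p m) :
    μ n (A m) * μ p (A p) = μ p (A m) * μ n (A p) := by
  induction hnp using ReflTransGen.head_induction_on with
  | refl => rfl
  | @head n n' hnn' hn'p ih =>
    have hpn : p ≠ n := by
      rintro rfl
      exact hnn'.not_reflTransGen hA hn'p
    have hmn : m ≠ n := by
      rintro rfl
      exact hpm.not_reflTransGen hA (hn'p.head hnn')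
    obtain ⟨a, -, hnA⟩ := hnn'.exists_apply_eq_mul
    rw [hnA m hmn, hnA p hpn, mul_assoc, ih, mul_left_comm]

lemma measureReal_eq_div_mul_of_wsucc [∀ n, IsFiniteMeasure (μ n)] (hA : ∀ n, μ n (A n) ≠ 0)
    (hnp : ReflTransGen (wsucc μ A) n p) (hpm : wsucc μ A p m) :
    (μ n).real (A m) = (μ p).real (A m) / (μ p).real (A p) * (μ n).real (A p) := by
  have h := congrArg ENNReal.toReal (apply_mul_apply_eq_of_wsucc hA hnp hpm)
  simp only [ENNReal.toReal_mul, ← measureReal_def] at h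
  have hp : (μ p).real (A p) ≠ 0 := (measureReal_eq_zero_iff (measure_ne_top _ _)).not.2 (hA p)
  field_simp
  linarith

lemma finite_setOf_wsucc_of_reflTransGen (hA : ∀ n, μ n (A n) ≠ 0)
    (hU : Relator.RightUnique (wsucc μ A)) (s : Finset ℕ) (m : ℕ) :
    {p | wsucc μ A p m ∧ ∃ n ∈ s, ReflTransGen (wsucc μ A) n p}.Finite := by
  have hsub : {p | wsucc μ A p m ∧ ∃ n ∈ s, ReflTransGen (wsucc μ A) n p} ⊆
      ⋃ n ∈ s, {p | ReflTransGen (wsucc μ A) n p ∧ wsucc μ A p m} :=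
    fun p ⟨hpm, n, hn, hnp⟩ => Set.mem_biUnion hn ⟨hnp, hpm⟩
  refine (s.finite_toSet.biUnion fun n _ => ?_).subset hsub
  exact Set.Subsingleton.finite fun p hp p' hp' =>
    eq_of_wsucc_of_reflTransGen hA hU hp.1 hp'.1 hp.2 hp'.2

lemma wsucc.abs_measureReal_div_le [IsFiniteMeasure (μ p)] (hp : μ p (A p) ≠ 0)
    (h : wsucc μ A p m) : |(μ p).real (A m) / (μ p).real (A p)| ≤ 1 / 2 := by
  have hle := ENNReal.toReal_mono (measure_ne_top _ _) (h.two_mul_apply_le hp)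
  rw [ENNReal.toReal_mul, ← measureReal_def, ← measureReal_def] at hle
  have hpos : 0 < (μ p).real (A p) := ENNReal.toReal_pos hp (measure_ne_top _ _)
  rw [abs_of_nonneg (div_nonneg measureReal_nonneg hpos.le), div_le_iff₀ hpos]
  norm_num at hle
  linarith

lemma measureReal_eq_ite_add_sum [∀ n, IsFiniteMeasure (μ n)] (hA : ∀ n, μ n (A n) ≠ 0)
    (hU : Relator.RightUnique (wsucc μ A))
    (h3 : ∀ n m, n ≠ m → ¬ TransGen (wsucc μ A) n m → μ n (A m) = 0) {Q : Finset ℕ}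
    (hQ : ∀ p ∈ Q, wsucc μ A p m)
    (hQ' : ∀ p, ReflTransGen (wsucc μ A) n p → wsucc μ A p m → p ∈ Q) :
    (μ n).real (A m) = (if n = m then (μ m).real (A m) else 0) +
      ∑ p ∈ Q, (μ p).real (A m) / (μ p).real (A p) * (μ n).real (A p) := by
  have hreach : ∀ k, (μ n).real (A k) ≠ 0 ↔ ReflTransGen (wsucc μ A) n k := fun k =>
    (measureReal_eq_zero_iff (measure_ne_top _ _)).not.trans
      (apply_ne_zero_iff_reflTransGen_wsucc hA h3)
  by_cases h : ∃ p, ReflTransGen (wsucc μ A) n p ∧ wsucc μ A p m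
  · obtain ⟨p, hnp, hpm⟩ := h
    have hnm : n ≠ m := by
      rintro rfl
      exact hpm.not_reflTransGen hA hnp
    rw [if_neg hnm, zero_add, Finset.sum_eq_single_of_mem p (hQ' p hnp hpm)]
    · exact measureReal_eq_div_mul_of_wsucc hA hnp hpm
    · intro p' hp' hp'p
      rw [not_ne_iff.1 (mt (hreach p').1 fun hnp' =>
        hp'p (eq_of_wsucc_of_reflTransGen hA hU hnp' hnp (hQ p' hp') hpm)), mul_zero]
  · push Not at h
    rw [Finset.sum_eq_zero fun p hp => ?_, add_zero]
    · split_ifs with hnm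
      · rw [hnm]
      · by_contra hne
        obtain hmn | ⟨p, hnp, hpm⟩ := ((hreach m).1 hne).cases_tail
        · exact hnm hmn.symm
        · exact h p hnp hpm
    · rw [not_ne_iff.1 (mt (hreach p).1 fun hnp => h p hnp (hQ p hp)), mul_zero]

lemma sum_mul_measureReal_eq [∀ n, IsFiniteMeasure (μ n)] (hA : ∀ n, μ n (A n) ≠ 0)
    (hU : Relator.RightUnique (wsucc μ A))
    (h3 : ∀ n m, n ≠ m → ¬ TransGen (wsucc μ A) n m → μ n (A m) = 0)
    (s : Finset ℕ) (c : ℕ → ℝ) {Q : Finset ℕ} (hQ : ∀ p ∈ Q, wsucc μ A p m)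
    (hQ' : ∀ n ∈ s, ∀ p, ReflTransGen (wsucc μ A) n p → wsucc μ A p m → p ∈ Q) (hm : m ∈ s) :
    ∑ n ∈ s, c n * (μ n).real (A m) = c m * (μ m).real (A m) +
      ∑ p ∈ Q, (μ p).real (A m) / (μ p).real (A p) * ∑ n ∈ s, c n * (μ n).real (A p) := by
  rw [Finset.sum_congr rfl fun n hn =>
    congrArg (c n * ·) (measureReal_eq_ite_add_sum hA hU h3 hQ (hQ' n hn))]
  simp only [mul_add, mul_ite, mul_zero, Finset.sum_add_distrib, Finset.sum_ite_eq', if_pos hm,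
    Finset.mul_sum]
  rw [Finset.sum_comm]
  simp only [mul_left_comm]

end wsucc

theorem stmt2_general {Ω : Type*} [MeasurableSpace Ω]
    (ε : ℝ) (hε : 0 < ε)
    (μ : ℕ → Measure Ω) (hfin : ∀ n, IsFiniteMeasure (μ n))
    (A : ℕ → Set Ω) (hmeas : ∀ n, MeasurableSet (A n))
    (hdisj : Pairwise (Function.onFun Disjoint A))
    (h1 : ∀ n, ENNReal.ofReal ε ≤ μ n (A n))
    (h2 : ∀ n, (∃! n', wsucc μ A n n') ∨ (∀ n', n' ≠ n → μ n (A n') = 0))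
    (h3 : ∀ n m, n ≠ m → ¬ Relation.TransGen (wsucc μ A) n m → μ n (A m) = 0) :
    ∀ (s : Finset ℕ) (c : ℕ → ℝ),
      (2 * ε / 3) * ∑ n ∈ s, |c n| ≤
        (((∑ n ∈ s, c n • (@Measure.toSignedMeasure Ω _ (μ n) (hfin n))).totalVariation)
          Set.univ).toReal := by
  intro s c
  have hA : ∀ n, μ n (A n) ≠ 0 := fun n => ((ENNReal.ofReal_pos.2 hε).trans_le (h1 n)).ne'
  set ν := ∑ n ∈ s, c n • (μ n).toSignedMeasure
  have hν : ∀ m, ν (A m) = ∑ n ∈ s, c n * (μ n).real (A m) := fun m => by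
    simp [ν, Measure.toSignedMeasure_apply_measurable (hmeas m)]
  have hU := wsucc_rightUnique hA h2
  have hQfin := finite_setOf_wsucc_of_reflTransGen hA hU s
  have hQ : ∀ m p, p ∈ (hQfin m).toFinset ↔ _ := fun m p => (hQfin m).mem_toFinset (a := p)
  have key : ε * ∑ n ∈ s, |c n| ≤ 3 / 2 * ν.totalVariation.real Set.univ := calc
    ε * ∑ n ∈ s, |c n| ≤ ∑ n ∈ s, |c n * (μ n).real (A n)| := by
      rw [Finset.mul_sum]
      gcongr with n
      rw [abs_mul, abs_of_nonneg measureReal_nonneg, mul_comm]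
      gcongr
      exact (ofReal_le_iff_le_toReal (measure_ne_top _ _)).1 (h1 n)
    _ ≤ 3 / 2 * ν.totalVariation.real Set.univ :=
      sum_abs_le_of_eq_add_sum (v := fun m => ν (A m)) (Q := fun m => (hQfin m).toFinset) s
        (fun m m' hmm' => Finset.disjoint_left.2 fun p hp hp' =>
          hmm' (hU ((hQ m p).1 hp).1 ((hQ m' p).1 hp').1))
        (fun m p hp => ((hQ m p).1 hp).1.abs_measureReal_div_le (hA p))
        (fun m hm => by
          simp only [hν]
          exact sum_mul_measureReal_eq hA hU h3 s c (fun p hp => ((hQ m p).1 hp).1)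
            (fun n hn p hnp hpm => (hQ m p).2 ⟨hpm, n, hn, hnp⟩) hm)
        (ν.sum_abs_apply_le_totalVariation hmeas hdisj)
  rw [← measureReal_def]
  linarith

/-- Lemma B of the paper: under conditions (1)–(3) on the convex combinations `μ n` of a
mutually singular family and the disjoint sets `A n`, one has
`‖Σ c_n μ_n‖ ≥ (2ε/3) Σ |c_n|`, i.e. `(μ n)` is equivalent to the `ℓ¹`-basis. -/
theorem stmt2 {Ω : Type*} [MeasurableSpace Ω] (M : Set (Measure Ω))
    (hMprob : ∀ m ∈ M, IsProbabilityMeasure m)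
    (hMsing : ∀ m ∈ M, ∀ m' ∈ M, m ≠ m' → m.MutuallySingular m')
    (ε : ℝ) (hε : 0 < ε)
    (μ : ℕ → Measure Ω) (hfin : ∀ n, IsFiniteMeasure (μ n))
    (hconv : ∀ n, ∃ (k : ℕ) (m : Fin k → Measure Ω) (w : Fin k → ℝ≥0∞),
      (∀ i, m i ∈ M) ∧ (∑ i, w i) = 1 ∧ μ n = ∑ i, w i • m i)
    (A : ℕ → Set Ω) (hmeas : ∀ n, MeasurableSet (A n))
    (hdisj : Pairwise (Function.onFun Disjoint A))
    (h1 : ∀ n, ENNReal.ofReal ε ≤ μ n (A n))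
    (h2 : ∀ n, (∃! n', wsucc μ A n n') ∨ (∀ n', n' ≠ n → μ n (A n') = 0))
    (h3 : ∀ n m, n ≠ m → ¬ Relation.TransGen (wsucc μ A) n m → μ n (A m) = 0) :
    ∀ (s : Finset ℕ) (c : ℕ → ℝ),
      (2 * ε / 3) * ∑ n ∈ s, |c n| ≤
        (((∑ n ∈ s, c n • (@Measure.toSignedMeasure Ω _ (μ n) (hfin n))).totalVariation)
          Set.univ).toReal :=
  stmt2_general ε hε μ hfin A hmeas hdisj h1 h2 h3
end

section
/- The relation ≻ defined as the transitive closure of ≻′ on a family of measures with associated disjoint sets is a strict partial order: it is transitive and irreflexive (μ ≻ μ is impossible). -/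
open MeasureTheory ENNReal

/-- The relation `≻`, the transitive closure of the relation `≻′` on a family of measures
with associated pairwise disjoint sets of nonzero mass, is a strict partial order:
transitive and irreflexive. -/
theorem stmt3 {Ω : Type*} [MeasurableSpace Ω] (M : Set (Measure Ω))
    (H : Measure Ω → Set Ω)
    (hdisj : M.PairwiseDisjoint H)
    (hne : ∀ m ∈ M, m (H m) ≠ 0)
    (r : Measure Ω → Measure Ω → Prop)
    (hr : ∀ m m', r m m' ↔ m ∈ M ∧ m' ∈ M ∧
      ∃ a : ℝ≥0∞, 0 < a ∧ a ≤ m (H m) / (2 * m' (H m')) ∧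
        m.restrict (⋃ n ∈ M \ {m}, H n) = a • m'.restrict (⋃ n ∈ M \ {m}, H n) ∧
        m' (H m) = 0) :
    Transitive (Relation.TransGen r) ∧ Irreflexive (Relation.TransGen r) := by
  have key : ∀ m m', Relation.TransGen r m m' → m ∈ M ∧ m' ∈ M ∧ m' (H m) = 0 := by
    intro m m' h
    induction h with
    | single h =>
      rcases (hr _ _).1 h with ⟨hm, hm', _, _, _, _, h0⟩
      exact ⟨hm, hm', h0⟩
    | tail hab hbc ih =>
      rename_i b c
      obtain ⟨hm, hb, hb0⟩ := ih
      rcases (hr _ _).1 hbc with ⟨_, hc, a, ha, _, heq, _⟩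
      refine ⟨hm, hc, ?_⟩
      have hmb : m ≠ b := fun h => hne m hm (h ▸ hb0)
      have hsub : H m ⊆ ⋃ n ∈ M \ {b}, H n := by
        intro x hx
        exact Set.mem_biUnion ⟨hm, hmb⟩ hx
      have h1 : b.restrict (⋃ n ∈ M \ {b}, H n) (H m) = b (H m) :=
        Measure.restrict_eq_self _ hsub
      have h2 : c.restrict (⋃ n ∈ M \ {b}, H n) (H m) = c (H m) :=
        Measure.restrict_eq_self _ hsub
      have := congrArg (fun μ : Measure Ω => μ (H m)) heq
      simp only [Measure.smul_apply, smul_eq_mul] at this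
      rw [h1, h2, hb0] at this
      rcases mul_eq_zero.1 this.symm with h | h
      · exact absurd h ha.ne'
      · exact h
  refine ⟨fun _ _ _ => Relation.TransGen.trans, fun m hm => ?_⟩
  obtain ⟨hmM, _, h0⟩ := key m m hm
  exact hne m hmM h0
end

section
/- Let α, β be countable ordinals with β < α, and suppose a compact Hausdorff space K′ is the one-point union (wedge at distinguished points) over n ∈ ℕ of compact spaces K_n where K_n is homeomorphic to [1, ω^{β_n}] with sup_n β_n = α and β_n < α for all n. If the distinguished point of each K_n is ω^{β_n}, then K′ is homeomorphic to [1, ω^α]. -/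
/-!
As `α` is countable, each `[0, ω^{β n})` is enumerated by a sequence `c n`. Because `ω^{β n}` is
additively principal, the partial sums `s_k` of `c n` stay below `ω^{β n}` and are cofinal in it,
so `[1, ω^{β n})` is the disjoint union of the compact clopen blocks `(s_k, s_{k+1}]`, and
`(s_k, s_k + c n k] ≅ (0, c n k]` by left translation. Enumerating all blocks of all `n` through
`Nat.pair` and concatenating them again by partial sums lays them out as a clopen partition of
`[1, ω^α)`, since `ω^α = sup ω^{β n}` is principal too. Finally `[1, ω^α]` is the one-point
compactification of `[1, ω^α)`.
-/

open Topology Ordinal Set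
open scoped Cardinal Function

noncomputable def Homeomorph.sigmaCongrRight {ι : Type*} {X Y : ι → Type*}
    [∀ i, TopologicalSpace (X i)] [∀ i, TopologicalSpace (Y i)] (e : ∀ i, X i ≃ₜ Y i) :
    (Σ i, X i) ≃ₜ Σ i, Y i :=
  (IsHomeomorph.sigmaMap (Y := Y) (f := id) (g := fun i => e i) Function.bijective_id
    fun i => (e i).isHomeomorph).homeomorph

theorem Topology.isOpenEmbedding_sigma_of_pairwise_disjoint {ι Y : Type*} {X : ι → Type*}
    [∀ i, TopologicalSpace (X i)] [TopologicalSpace Y] {f : (Σ i, X i) → Y}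
    (hf : ∀ i, IsOpenEmbedding fun x => f ⟨i, x⟩)
    (hd : Pairwise (Disjoint on fun i => range fun x => f ⟨i, x⟩)) : IsOpenEmbedding f := by
  refine .of_continuous_injective_isOpenMap (continuous_sigma fun i => (hf i).continuous) ?_
    (isOpenMap_sigma.2 fun i => (hf i).isOpenMap)
  rintro ⟨i, x⟩ ⟨j, y⟩ hxy
  obtain rfl | hij := eq_or_ne i j
  · rw [(hf i).injective hxy]
  · exact ((hd hij).ne_of_mem (mem_range_self x) (mem_range_self y) hxy).elim

theorem Monotone.iUnion_Ioc_succ_eq_Ioo {α : Type*} [LinearOrder α] {s : ℕ → α} (hs : Monotone s)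
    {b : α} (hlt : ∀ k, s k < b) (hcof : ∀ y < b, ∃ k, y ≤ s k) :
    ⋃ k, Ioc (s k) (s (k + 1)) = Ioo (s 0) b := by
  refine Subset.antisymm (iUnion_subset fun k y hy => ⟨(hs k.zero_le).trans_lt hy.1,
    hy.2.trans_lt (hlt _)⟩) fun y hy => ?_
  have hex := hcof y hy.2
  obtain ⟨j, hj⟩ : ∃ j, Nat.find hex = j + 1 :=
    Nat.exists_eq_succ_of_ne_zero fun h0 => (Nat.find_spec hex).not_gt (h0 ▸ hy.1)
  exact mem_iUnion.2 ⟨j, not_le.1 (Nat.find_min hex (hj ▸ j.lt_succ_self)),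
    hj ▸ Nat.find_spec hex⟩

namespace Ordinal

theorem range_add_Ioc (a t : Ordinal) :
    range (fun x : Ioc (0 : Ordinal) t => a + (x : Ordinal)) = Ioc a (a + t) := by
  ext y
  refine ⟨?_, fun hy => ?_⟩
  · rintro ⟨⟨x, hx0, hxt⟩, rfl⟩
    exact ⟨lt_add_of_pos_right a hx0, add_le_add_right hxt a⟩
  · refine ⟨⟨y - a, Ordinal.lt_sub.2 (by rw [add_zero]; exact hy.1), ?_⟩,
      Ordinal.add_sub_cancel_of_le hy.1.le⟩
    rw [Ordinal.sub_le]
    exact hy.2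

theorem isOpenEmbedding_add_Ioc (a t : Ordinal) :
    IsOpenEmbedding fun x : Ioc (0 : Ordinal) t => a + (x : Ordinal) := by
  have : CompactSpace (Ioc (0 : Ordinal) t) := by
    rw [← isCompact_iff_compactSpace, ← Order.Icc_succ_left]
    exact isCompact_Icc
  refine ⟨(((isNormal_add_right a).continuous.comp continuous_subtype_val).isClosedEmbedding
    fun x y hxy => Subtype.ext ((add_right_inj a).1 hxy)).isEmbedding, ?_⟩
  rw [range_add_Ioc, ← Order.Ioo_succ_right]
  exact isOpen_Ioo

def partialSums (t : ℕ → Ordinal) : ℕ → Ordinal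
  | 0 => 0
  | k + 1 => partialSums t k + t k

theorem monotone_partialSums (t : ℕ → Ordinal) : Monotone (partialSums t) :=
  monotone_nat_of_le_succ fun _ => le_self_add

theorem partialSums_lt {t : ℕ → Ordinal} {o : Ordinal} (ho : IsPrincipal (· + ·) o)
    (ht : ∀ k, t k < o) : ∀ k, partialSums t k < o
  | 0 => zero_le.trans_lt (ht 0)
  | k + 1 => ho (partialSums_lt ho ht k) (ht k)

theorem iUnion_Ioc_partialSums {t : ℕ → Ordinal} {o : Ordinal} (ho : IsPrincipal (· + ·) o)
    (ht : ∀ k, t k < o) (hcof : ∀ y < o, ∃ k, y ≤ t k) :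
    ⋃ k, Ioc (partialSums t k) (partialSums t (k + 1)) = Ioo 0 o :=
  (monotone_partialSums t).iUnion_Ioc_succ_eq_Ioo (partialSums_lt ho ht) fun y hy =>
    let ⟨k, hk⟩ := hcof y hy
    ⟨k + 1, hk.trans le_add_self⟩

theorem isOpenEmbedding_sigma_add_Ioc {ι : Type*} (a t : ι → Ordinal)
    (hd : Pairwise (Disjoint on fun i => Ioc (a i) (a i + t i))) :
    IsOpenEmbedding fun p : Σ i, Ioc (0 : Ordinal) (t i) => a p.1 + (p.2 : Ordinal) :=
  isOpenEmbedding_sigma_of_pairwise_disjoint (fun i => isOpenEmbedding_add_Ioc (a i) (t i))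
    (by simpa only [range_add_Ioc] using hd)

theorem range_sigma_add_Ioc {ι : Type*} (a t : ι → Ordinal) :
    range (fun p : Σ i, Ioc (0 : Ordinal) (t i) => a p.1 + (p.2 : Ordinal)) =
      ⋃ i, Ioc (a i) (a i + t i) := by
  simp only [range_sigma_eq_iUnion_range, range_add_Ioc]

noncomputable def sigmaIocHomeomorphIoo {c : ℕ → Ordinal} {o : Ordinal}
    (ho : IsPrincipal (· + ·) o) (hc : range c = Iio o) :
    (Σ k, Ioc (0 : Ordinal) (c k)) ≃ₜ Ioo (0 : Ordinal) o :=
  (isOpenEmbedding_sigma_add_Ioc (partialSums c) c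
    (monotone_partialSums c).pairwise_disjoint_on_Ioc_succ).isEmbedding.toHomeomorph.trans
    (Homeomorph.setCongr (by
      rw [range_sigma_add_Ioc]
      exact iUnion_Ioc_partialSums ho (fun k => hc.subset (mem_range_self k))
        fun y hy => let ⟨k, hk⟩ := hc.symm.subset hy; ⟨k, hk.ge⟩))

noncomputable def sigmaSigmaIocHomeomorphIoo {c : ℕ → ℕ → Ordinal} {o : Ordinal}
    (ho : IsPrincipal (· + ·) o) (hc : ∀ n k, c n k < o) (hcof : ∀ y < o, ∃ n k, y ≤ c n k) :
    (Σ n, Σ k, Ioc (0 : Ordinal) (c n k)) ≃ₜ Ioo (0 : Ordinal) o := by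
  let θ : ℕ → Ordinal := fun m => c (Nat.unpair m).1 (Nat.unpair m).2
  let I : ℕ → Set Ordinal := fun m => Ioc (partialSums θ m) (partialSums θ (m + 1))
  have hI : Pairwise (Disjoint on I) := (monotone_partialSums θ).pairwise_disjoint_on_Ioc_succ
  have hθ n k : partialSums θ (Nat.pair n k) + c n k = partialSums θ (Nat.pair n k + 1) := by
    simp [partialSums, θ]
  let G n (p : Σ k, Ioc (0 : Ordinal) (c n k)) : Ordinal := partialSums θ (Nat.pair n p.1) + p.2
  have hG n : IsOpenEmbedding (G n) :=
    isOpenEmbedding_sigma_add_Ioc (fun k => partialSums θ (Nat.pair n k)) (c n) <| by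
      simp only [hθ]
      exact hI.comp_of_injective fun k k' h => (Nat.pair_eq_pair.1 h).2
  have hrangeG n : range (G n) = ⋃ k, I (Nat.pair n k) := by
    rw [range_sigma_add_Ioc (fun k => partialSums θ (Nat.pair n k)) (c n)]
    simp only [hθ, I]
  have hf : IsOpenEmbedding fun p : Σ n, Σ k, Ioc (0 : Ordinal) (c n k) => G p.1 p.2 := by
    refine isOpenEmbedding_sigma_of_pairwise_disjoint hG fun n n' hnn' => ?_
    simp only [Function.onFun, hrangeG]
    exact disjoint_iUnion_left.2 fun k => disjoint_iUnion_right.2 fun k' =>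
      hI fun h => hnn' (Nat.pair_eq_pair.1 h).1
  refine hf.isEmbedding.toHomeomorph.trans (Homeomorph.setCongr ?_)
  rw [range_sigma_eq_iUnion_range, iUnion_congr hrangeG,
    ← iUnion_unpair fun n k => I (Nat.pair n k)]
  simp only [Nat.pair_unpair]
  refine iUnion_Ioc_partialSums ho (fun m => hc _ _) fun y hy => ?_
  obtain ⟨n, k, hk⟩ := hcof y hy
  exact ⟨Nat.pair n k, by simpa [θ] using hk⟩

theorem nonempty_sigma_Ioo_homeomorph_Ioo_iSup {o : ℕ → Ordinal}
    (ho : ∀ n, IsPrincipal (· + ·) (o n)) (hpos : ∀ n, 0 < o n)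
    (hcount : ∀ n, (Iio (o n)).Countable) :
    Nonempty ((Σ n, Ioo (0 : Ordinal) (o n)) ≃ₜ Ioo (0 : Ordinal) (⨆ n, o n)) := by
  choose c hc using fun n => (hcount n).exists_eq_range ⟨0, hpos n⟩
  refine ⟨(Homeomorph.sigmaCongrRight fun n =>
    (sigmaIocHomeomorphIoo (ho n) (hc n).symm).symm).trans
    (sigmaSigmaIocHomeomorphIoo (IsPrincipal.iSup ho) (fun n k => ?_) fun y hy => ?_)⟩
  · exact ((hc n).superset (mem_range_self k)).trans_le (Ordinal.le_iSup o n)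
  · obtain ⟨n, hn⟩ := Ordinal.lt_iSup_iff.1 hy
    obtain ⟨k, rfl⟩ := (hc n).subset hn
    exact ⟨n, k, le_rfl⟩

theorem countable_Iio_omega0_opow {a : Ordinal} (ha : a.card ≤ ℵ₀) : (Iio (ω ^ a)).Countable := by
  rw [← Cardinal.le_aleph0_iff_set_countable, Cardinal.mk_Iio_ordinal, Cardinal.lift_le_aleph0]
  exact (card_opow_le ω a).trans (by simp [ha])

noncomputable def puncturedIccHomeomorphIoo (o : Ordinal) :
    {x : Icc (1 : Ordinal) o // (x : Ordinal) ≠ o} ≃ₜ Ioo (0 : Ordinal) o :=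
  (IsEmbedding.subtypeVal.comp IsEmbedding.subtypeVal).toHomeomorph.trans
    (Homeomorph.setCongr (by
      ext y
      refine ⟨?_, fun hy => ⟨⟨⟨y, Order.one_le_iff_pos.2 hy.1, hy.2.le⟩, hy.2.ne⟩, rfl⟩⟩
      rintro ⟨⟨⟨y, hy1, hyo⟩, hne⟩, rfl⟩
      exact ⟨Order.one_le_iff_pos.1 hy1, lt_of_le_of_ne hyo hne⟩))

noncomputable def onePointIooHomeomorphIcc {o : Ordinal} (ho : 0 < o) :
    OnePoint (Ioo (0 : Ordinal) o) ≃ₜ Icc (1 : Ordinal) o :=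
  OnePoint.equivOfIsEmbeddingOfRangeEq ⟨o, Order.one_le_iff_pos.2 ho, le_rfl⟩
    (inclusion fun y hy => ⟨Order.one_le_iff_pos.2 hy.1, hy.2.le⟩) (IsEmbedding.inclusion _) (by
      ext ⟨y, hy⟩
      refine ⟨?_, fun hne => ⟨⟨y, Order.one_le_iff_pos.1 hy.1,
        lt_of_le_of_ne hy.2 fun h => hne (Subtype.ext h)⟩, rfl⟩⟩
      rintro ⟨⟨z, _, hzo⟩, hzy⟩ (h : _ = _)
      exact hzo.ne (congrArg Subtype.val (hzy.trans h)))

end Ordinal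

theorem stmt5_general (α : Ordinal) (hα : α.card ≤ Cardinal.aleph0) (β : ℕ → Ordinal)
    (hsup : (⨆ n, β n) = α) :
    Nonempty
      ((OnePoint (Σ n : ℕ, {x : ↥(Set.Icc (1 : Ordinal) (ω ^ β n)) // (x : Ordinal) ≠ ω ^ β n}))
        ≃ₜ ↥(Set.Icc (1 : Ordinal) (ω ^ α))) := by
  have hcard n : (β n).card ≤ ℵ₀ := (card_le_card (hsup ▸ Ordinal.le_iSup β n)).trans hα
  have hsup' : ⨆ n, ω ^ β n = ω ^ α := by
    rw [← hsup]
    exact ((isNormal_opow one_lt_omega0).map_iSup bddAbove_of_small).symm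
  obtain ⟨E⟩ := nonempty_sigma_Ioo_homeomorph_Ioo_iSup (fun n => isPrincipal_add_omega0_opow (β n))
    (fun n => opow_pos _ omega0_pos) fun n => countable_Iio_omega0_opow (hcard n)
  rw [hsup'] at E
  let P := Homeomorph.sigmaCongrRight fun n => puncturedIccHomeomorphIoo (ω ^ β n)
  exact ⟨(P.trans E).onePointCongr.trans (onePointIooHomeomorphIcc (opow_pos _ omega0_pos))⟩

/-- A countable-cofinality one-point union of ordinal intervals `[1, ω^{β n}]`, wedged at
their top points `ω^{β n}`, with `sup β n = α` and `β n < α`, is homeomorphic to `[1, ω^α]`. -/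
theorem stmt5 (α : Ordinal) (hα : α.card ≤ Cardinal.aleph0) (β : ℕ → Ordinal)
    (hβ : ∀ n, β n < α) (hsup : (⨆ n, β n) = α) :
    Nonempty
      ((OnePoint (Σ n : ℕ, {x : ↥(Set.Icc (1 : Ordinal) (ω ^ β n)) // (x : Ordinal) ≠ ω ^ β n}))
        ≃ₜ ↥(Set.Icc (1 : Ordinal) (ω ^ α))) :=
  stmt5_general α hα β hsup
end

section
/- (Compactness of the extended measure set.) With notation as in Lemma 1 of the paper: if L and each L_n are weak*-compact sets of purely atomic finitely supported probability measures (on K, K_n respectively) with δ_{k_{n,0}} ∈ L_n for each n, then the set L′ = { Σ_{k ∈ supp l} l(k) Σ_{j ∈ K_n} l_n(j) δ_{(k,l,n,j)} : l ∈ L, n ∈ ℕ, l_n ∈ L_n } is weak*-compact in C(K′)*. -/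
open Topology Filter
open scoped Classical

/-- A fiber point `(k, l, n, j)` (with `j ≠ k_{n,0}`) of the extension `K′` in the
`⊗`-construction of the paper. -/
structure FiberPt (K : Type*) (Kn : ℕ → Type*) (L : Set (K →₀ ℝ)) (k0 : ∀ n, Kn n) where
  n : ℕ
  k : K
  l : K →₀ ℝ
  j : Kn n
  hl : l ∈ L
  hk : l k ≠ 0
  hj : j ≠ k0 n

/-- The underlying set of `K′ = (K, L) ⊗ {(Kn n, Ln n)}`. -/
def GlueSpace (K : Type*) (Kn : ℕ → Type*) (L : Set (K →₀ ℝ)) (k0 : ∀ n, Kn n) : Type _ :=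
  K ⊕ FiberPt K Kn L k0

section Top

variable {K : Type*} {Kn : ℕ → Type*} {L : Set (K →₀ ℝ)} {k0 : ∀ n, Kn n}
variable [TopologicalSpace K] [∀ n, TopologicalSpace (Kn n)]

/-- A basic open set of `K′` inside a single fiber copy of `Kn n \ {k_{n,0}}`. -/
def fiberOpen (n : ℕ) (k : K) (l : K →₀ ℝ) (U : Set (Kn n)) :
    Set (GlueSpace K Kn L k0) :=
  Sum.inr '' {q : FiberPt K Kn L k0 | ∃ h : q.n = n, q.k = k ∧ q.l = l ∧ (h ▸ q.j) ∈ U}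

/-- A basic neighborhood of the base copy of `K` in `K′`. -/
def baseOpen (G : Set K) (F : Finset (K × (K →₀ ℝ) × ℕ))
    (C : (t : K × (K →₀ ℝ) × ℕ) → Set (Kn t.2.2)) : Set (GlueSpace K Kn L k0) :=
  Sum.inl '' G ∪
    Sum.inr '' {q : FiberPt K Kn L k0 |
      q.k ∈ G ∧ ¬((q.k, q.l, q.n) ∈ F ∧ q.j ∈ C (q.k, q.l, q.n))}

/-- The generating family for the topology of `K′` (Definition 1 of the paper). -/
def glueGen : Set (Set (GlueSpace K Kn L k0)) :=
  {S | ∃ (n : ℕ) (k : K) (l : K →₀ ℝ) (U : Set (Kn n)),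
      IsOpen U ∧ k0 n ∉ U ∧ S = fiberOpen n k l U} ∪
  {S | ∃ (G : Set K) (F : Finset (K × (K →₀ ℝ) × ℕ))
      (C : (t : K × (K →₀ ℝ) × ℕ) → Set (Kn t.2.2)),
      IsOpen G ∧ (∀ t ∈ F, IsCompact (C t) ∧ k0 t.2.2 ∉ C t) ∧ S = baseOpen G F C}

/-- The topology of `K′ = (K,L) ⊗ {(Kn n, Ln n)}`. -/
instance glueTop : TopologicalSpace (GlueSpace K Kn L k0) :=
  TopologicalSpace.generateFrom glueGen

end Top

/-- The weak* topology on finitely supported (purely atomic) measures on `X`, induced by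
testing against `C(X, ℝ)`. -/
noncomputable instance finsuppWeakTop (X : Type*) [TopologicalSpace X] :
    TopologicalSpace (X →₀ ℝ) :=
  TopologicalSpace.induced (fun μ (f : C(X, ℝ)) => μ.sum fun x c => c * f x)
    Pi.topologicalSpace

/-- The extension of the measure `l ∈ L` by the measure `ln` on the `n`-th fiber:
`Σ_{k ∈ supp l} l(k) Σ_{j ∈ Kn n} ln(j) δ_{(k,l,n,j)}`, with the points `(k,l,n,k_{n,0})`
identified with the base points `(k, ∅)`. -/
noncomputable def extendM {K : Type*} {Kn : ℕ → Type*} (L : Set (K →₀ ℝ)) (k0 : ∀ n, Kn n)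
    (l : K →₀ ℝ) (hl : l ∈ L) (n : ℕ) (ln : Kn n →₀ ℝ) : GlueSpace K Kn L k0 →₀ ℝ :=
  ∑ k ∈ l.support.attach, ∑ j ∈ ln.support,
    Finsupp.single
      (if h : j = k0 n then (Sum.inl k.1 : GlueSpace K Kn L k0)
       else Sum.inr ⟨n, k.1, l, j, hl, Finsupp.mem_support_iff.mp k.2, h⟩)
      (l k.1 * ln j)

/-- The extended measure set `L′` of the `⊗`-construction. -/
def glueL' {K : Type*} {Kn : ℕ → Type*} (L : Set (K →₀ ℝ)) (k0 : ∀ n, Kn n)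
    (Ln : ∀ n, Set (Kn n →₀ ℝ)) : Set (GlueSpace K Kn L k0 →₀ ℝ) :=
  {μ | ∃ (l : K →₀ ℝ) (hl : l ∈ L) (n : ℕ) (ln : Kn n →₀ ℝ),
    ln ∈ Ln n ∧ μ = extendM L k0 l hl n ln}

/-!
Parametrize `L′` by the triples `(l, n, l_n)` and take an ultrafilter on the parameters. If it
concentrates on one pair `(l, n)`, the extended measures converge inside the image of the compact
set `Ln n` under the continuous map `l_n ↦ extendM l n l_n`. Otherwise it eventually avoids every
finite set of pairs `(l, n)`. By compactness of `K` and the shape of the basic neighbourhoods of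
base points, a continuous `f` on `K′` is `ε`-close to `f (k, ∅)` at every fibre point `(k, l, n, j)`
outside finitely many pairs `(l, n)`; as all measures involved are probabilities, the extended
measures then converge to `Φ(lim l)`, which lies in `L′` because `δ_{k_{0,0}} ∈ L_0`.
-/

open Set Finsupp

section Pairing

variable {X : Type*} [TopologicalSpace X]

noncomputable def pairing (μ : X →₀ ℝ) (f : C(X, ℝ)) : ℝ :=
  μ.sum fun x c => c * f x

theorem pairing_eq_sum_attach (μ : X →₀ ℝ) (f : C(X, ℝ)) :
    pairing μ f = ∑ x ∈ μ.support.attach, μ x * f x :=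
  (Finset.sum_attach μ.support fun x => μ x * f x).symm

theorem tendsto_nhds_iff_pairing {α : Type*} {F : Filter α} {m : α → X →₀ ℝ} {μ : X →₀ ℝ} :
    Tendsto m F (𝓝 μ) ↔
      ∀ f : C(X, ℝ), Tendsto (fun a => pairing (m a) f) F (𝓝 (pairing μ f)) := by
  rw [nhds_induced, tendsto_comap_iff, tendsto_pi_nhds]
  rfl

theorem continuous_iff_pairing {Y : Type*} [TopologicalSpace Y] {m : Y → X →₀ ℝ} :
    Continuous m ↔ ∀ f : C(X, ℝ), Continuous fun y => pairing (m y) f := by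
  rw [continuous_induced_rng, continuous_pi_iff]
  rfl

theorem continuous_pairing (f : C(X, ℝ)) : Continuous fun μ : X →₀ ℝ => pairing μ f :=
  continuous_iff_pairing.1 continuous_id f

theorem pairing_single (x : X) (c : ℝ) (f : C(X, ℝ)) : pairing (single x c) f = c * f x :=
  sum_single_index (zero_mul _)

theorem pairing_finset_sum {ι : Type*} (s : Finset ι) (μ : ι → X →₀ ℝ) (f : C(X, ℝ)) :
    pairing (∑ i ∈ s, μ i) f = ∑ i ∈ s, pairing (μ i) f :=
  (sum_finsetSum_index (fun _ => zero_mul _) fun _ _ _ => add_mul _ _ _).symm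

end Pairing

theorem abs_sum_mul_le_of_abs_le {ι : Type*} {s : Finset ι} {w x : ι → ℝ} {ε : ℝ}
    (hw : ∀ i ∈ s, 0 ≤ w i) (hw1 : ∑ i ∈ s, w i = 1) (hx : ∀ i ∈ s, |x i| ≤ ε) :
    |∑ i ∈ s, w i * x i| ≤ ε :=
  calc |∑ i ∈ s, w i * x i| ≤ ∑ i ∈ s, w i * |x i| := by
        refine (Finset.abs_sum_le_sum_abs _ _).trans_eq (Finset.sum_congr rfl fun i hi => ?_)
        rw [abs_mul, abs_of_nonneg (hw i hi)]
    _ ≤ ∑ i ∈ s, w i * ε :=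
        Finset.sum_le_sum fun i hi => mul_le_mul_of_nonneg_left (hx i hi) (hw i hi)
    _ = ε := by rw [← Finset.sum_mul, hw1, one_mul]

def IsProbabilityFinsupp {X : Type*} (μ : X →₀ ℝ) : Prop :=
  (∀ x, 0 ≤ μ x) ∧ (μ.sum fun _ c => c) = 1

theorem IsProbabilityFinsupp.abs_pairing_sub_le {X : Type*} [TopologicalSpace X] {μ : X →₀ ℝ}
    (hμ : IsProbabilityFinsupp μ) {f : C(X, ℝ)} {c ε : ℝ} (h : ∀ x ∈ μ.support, |f x - c| ≤ ε) :
    |pairing μ f - c| ≤ ε := by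
  have hμ1 : ∑ x ∈ μ.support, μ x = 1 := hμ.2
  have hc : c = ∑ x ∈ μ.support, μ x * c := by rw [← Finset.sum_mul, hμ1, one_mul]
  rw [pairing, Finsupp.sum, hc, ← Finset.sum_sub_distrib]
  convert abs_sum_mul_le_of_abs_le (fun x _ => hμ.1 x) hμ1 h using 3 with x
  ring

namespace GlueSpace

variable {K : Type*} {Kn : ℕ → Type*} {L : Set (K →₀ ℝ)} {k0 : ∀ n, Kn n}

noncomputable def fiberPt (l : K →₀ ℝ) (hl : l ∈ L) (n : ℕ) (k : K) (hk : l k ≠ 0) (j : Kn n) :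
    GlueSpace K Kn L k0 :=
  if h : j = k0 n then Sum.inl k else Sum.inr ⟨n, k, l, j, hl, hk, h⟩

@[simp] theorem fiberPt_k0 (l : K →₀ ℝ) (hl : l ∈ L) (n : ℕ) (k : K) (hk : l k ≠ 0) :
    fiberPt (k0 := k0) l hl n k hk (k0 n) = Sum.inl k :=
  dif_pos rfl

theorem fiberPt_of_ne {l : K →₀ ℝ} {hl : l ∈ L} {n : ℕ} {k : K} {hk : l k ≠ 0} {j : Kn n}
    (hj : j ≠ k0 n) : fiberPt (k0 := k0) l hl n k hk j = Sum.inr ⟨n, k, l, j, hl, hk, hj⟩ :=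
  dif_neg hj

variable {G : Set K} {F : Finset (K × (K →₀ ℝ) × ℕ)}
  {C : (t : K × (K →₀ ℝ) × ℕ) → Set (Kn t.2.2)}

theorem inl_mem_baseOpen {x : K} :
    (Sum.inl x : GlueSpace K Kn L k0) ∈ baseOpen G F C ↔ x ∈ G := by
  refine ⟨?_, fun h => Or.inl ⟨x, h, rfl⟩⟩
  rintro (⟨y, hy, ⟨⟩⟩ | ⟨q, -, ⟨⟩⟩)
  exact hy

theorem inr_mem_baseOpen {q : FiberPt K Kn L k0} :
    (Sum.inr q : GlueSpace K Kn L k0) ∈ baseOpen G F C ↔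
      q.k ∈ G ∧ ¬((q.k, q.l, q.n) ∈ F ∧ q.j ∈ C (q.k, q.l, q.n)) := by
  refine ⟨?_, fun h => Or.inr ⟨q, h, rfl⟩⟩
  rintro (⟨y, -, ⟨⟩⟩ | ⟨q, hq, ⟨⟩⟩)
  exact hq

theorem inl_notMem_fiberOpen {n : ℕ} {k : K} {l : K →₀ ℝ} {U : Set (Kn n)} {x : K} :
    (Sum.inl x : GlueSpace K Kn L k0) ∉ fiberOpen n k l U := by
  rintro ⟨q, -, ⟨⟩⟩

theorem inr_mem_fiberOpen {n : ℕ} {k : K} {l : K →₀ ℝ} {U : Set (Kn n)}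
    {q : FiberPt K Kn L k0} :
    (Sum.inr q : GlueSpace K Kn L k0) ∈ fiberOpen n k l U ↔
      ∃ h : q.n = n, q.k = k ∧ q.l = l ∧ (h ▸ q.j) ∈ U := by
  refine ⟨?_, fun h => ⟨q, h, rfl⟩⟩
  rintro ⟨q, hq, ⟨⟩⟩
  exact hq

variable [TopologicalSpace K] [∀ n, TopologicalSpace (Kn n)]

noncomputable def baseIncl : C(K, GlueSpace K Kn L k0) where
  toFun := Sum.inl
  continuous_toFun := by
    refine continuous_generateFrom_iff.2 ?_
    rintro _ (⟨n, k, l, U, -, -, rfl⟩ | ⟨G, F, C, hG, -, rfl⟩)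
    · convert isOpen_empty
      exact eq_empty_of_forall_notMem fun x => inl_notMem_fiberOpen
    · convert hG
      ext x
      exact inl_mem_baseOpen

@[simp] theorem baseIncl_apply (x : K) : (baseIncl x : GlueSpace K Kn L k0) = Sum.inl x := rfl

theorem continuous_fiberPt [∀ n, T2Space (Kn n)] (l : K →₀ ℝ) (hl : l ∈ L) (n : ℕ) (k : K)
    (hk : l k ≠ 0) : Continuous (fiberPt (k0 := k0) l hl n k hk) := by
  refine continuous_generateFrom_iff.2 ?_
  rintro _ (⟨n', k', l', U, hU, hU0, rfl⟩ | ⟨G, F, C, -, hFC, rfl⟩)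
  · rcases eq_or_ne n n' with rfl | hn
    · convert hU.inter (isOpen_const (p := k = k' ∧ l = l')) using 1
      ext j
      rw [mem_preimage]
      by_cases hj : j = k0 n
      · subst hj
        rw [fiberPt_k0]
        exact iff_of_false inl_notMem_fiberOpen fun h => hU0 h.1
      · rw [fiberPt_of_ne hj]
        exact inr_mem_fiberOpen.trans
          ⟨fun ⟨_, hk', hl', hj⟩ => ⟨hj, hk', hl'⟩, fun ⟨hj, hk', hl'⟩ => ⟨rfl, hk', hl', hj⟩⟩
    · convert isOpen_empty
      refine eq_empty_of_forall_notMem fun j => ?_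
      rw [mem_preimage]
      by_cases hj : j = k0 n
      · subst hj
        rw [fiberPt_k0]
        exact inl_notMem_fiberOpen
      · rw [fiberPt_of_ne hj]
        exact fun h => hn (inr_mem_fiberOpen.1 h).1
  · have hC : IsClosed {j | (k, l, n) ∈ F ∧ j ∈ C (k, l, n)} := by
      by_cases hF : (k, l, n) ∈ F
      · simpa [hF] using (hFC _ hF).1.isClosed
      · simp [hF]
    convert (isOpen_const (p := k ∈ G)).inter hC.isOpen_compl
    ext j
    rw [mem_preimage]
    by_cases hj : j = k0 n
    · subst hj
      rw [fiberPt_k0]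
      exact inl_mem_baseOpen.trans (iff_self_and.2 fun _ hF => (hFC _ hF.1).2 hF.2)
    · rw [fiberPt_of_ne hj]
      exact inr_mem_baseOpen

theorem exists_isOpen_finset_of_inl_mem {U : Set (GlueSpace K Kn L k0)} (hU : IsOpen U) {k : K}
    (hk : Sum.inl k ∈ U) :
    ∃ G : Set K, IsOpen G ∧ k ∈ G ∧ ∃ B : Finset ((K →₀ ℝ) × ℕ),
      (∀ x ∈ G, Sum.inl x ∈ U) ∧
        ∀ q : FiberPt K Kn L k0, q.k ∈ G → (q.l, q.n) ∉ B → Sum.inr q ∈ U := by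
  have hU' : TopologicalSpace.GenerateOpen glueGen U := hU
  clear hU
  induction hU' with
  | basic S hS =>
    rcases hS with ⟨n, k', l, V, -, -, rfl⟩ | ⟨G, F, C, hG, -, rfl⟩
    · exact absurd hk inl_notMem_fiberOpen
    · exact ⟨G, hG, inl_mem_baseOpen.1 hk, F.image Prod.snd, fun x hx => inl_mem_baseOpen.2 hx,
        fun q hq hqB => inr_mem_baseOpen.2 ⟨hq, fun h => hqB (Finset.mem_image_of_mem _ h.1)⟩⟩
  | univ => exact ⟨univ, isOpen_univ, trivial, ∅, fun _ _ => trivial, fun _ _ _ => trivial⟩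
  | inter U V _ _ ihU ihV =>
    obtain ⟨G, hG, hkG, B, hGU, hBU⟩ := ihU hk.1
    obtain ⟨G', hG', hkG', B', hGV, hBV⟩ := ihV hk.2
    exact ⟨G ∩ G', hG.inter hG', ⟨hkG, hkG'⟩, B ∪ B', fun x hx => ⟨hGU x hx.1, hGV x hx.2⟩,
      fun q hq hqB => ⟨hBU q hq.1 fun h => hqB (Finset.mem_union_left _ h),
        hBV q hq.2 fun h => hqB (Finset.mem_union_right _ h)⟩⟩
  | sUnion S _ ih =>
    obtain ⟨s, hs, hks⟩ := hk
    obtain ⟨G, hG, hkG, B, hGs, hBs⟩ := ih s hs hks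
    exact ⟨G, hG, hkG, B, fun x hx => ⟨s, hs, hGs x hx⟩, fun q hq hqB => ⟨s, hs, hBs q hq hqB⟩⟩

theorem exists_finset_abs_sub_le [CompactSpace K] (f : C(GlueSpace K Kn L k0, ℝ)) {ε : ℝ}
    (hε : 0 < ε) :
    ∃ B : Finset ((K →₀ ℝ) × ℕ), ∀ q : FiberPt K Kn L k0, (q.l, q.n) ∉ B →
      |f (Sum.inr q) - f (Sum.inl q.k)| ≤ ε := by
  have hnhds : ∀ k : K, ∃ G : Set K, IsOpen G ∧ k ∈ G ∧ ∃ B : Finset ((K →₀ ℝ) × ℕ),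
      (∀ x ∈ G, dist (f (Sum.inl x)) (f (Sum.inl k)) < ε / 2) ∧
        ∀ q : FiberPt K Kn L k0, q.k ∈ G → (q.l, q.n) ∉ B →
          dist (f (Sum.inr q)) (f (Sum.inl k)) < ε / 2 := fun k =>
    exists_isOpen_finset_of_inl_mem (f.continuous.isOpen_preimage _ Metric.isOpen_ball)
      (Metric.mem_ball_self (half_pos hε))
  choose G hG hkG B hGf hBf using hnhds
  obtain ⟨t, ht⟩ := isCompact_univ.elim_finite_subcover G hG fun k _ => mem_iUnion.2 ⟨k, hkG k⟩
  refine ⟨t.biUnion B, fun q hq => ?_⟩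
  obtain ⟨i, hit, hqi⟩ := mem_iUnion₂.1 (ht (mem_univ q.k))
  have h₁ := hBf i q hqi fun h => hq (Finset.mem_biUnion.2 ⟨i, hit, h⟩)
  have h₂ := hGf i q.k hqi
  rw [← Real.dist_eq]
  linarith [dist_triangle_right (f (Sum.inr q)) (f (Sum.inl q.k)) (f (Sum.inl i))]

variable [∀ n, T2Space (Kn n)]

noncomputable def fiberIncl (l : K →₀ ℝ) (hl : l ∈ L) (n : ℕ) (k : K) (hk : l k ≠ 0) :
    C(Kn n, GlueSpace K Kn L k0) :=
  ⟨fiberPt l hl n k hk, continuous_fiberPt l hl n k hk⟩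

end GlueSpace

open GlueSpace

section Extension

variable {K : Type*} {Kn : ℕ → Type*} {L : Set (K →₀ ℝ)} {k0 : ∀ n, Kn n}
  [TopologicalSpace K] [∀ n, TopologicalSpace (Kn n)] [∀ n, T2Space (Kn n)]

theorem pairing_extendM (l : K →₀ ℝ) (hl : l ∈ L) (n : ℕ) (ln : Kn n →₀ ℝ)
    (f : C(GlueSpace K Kn L k0, ℝ)) :
    pairing (extendM L k0 l hl n ln) f = ∑ k ∈ l.support.attach,
      l k * pairing ln (f.comp (fiberIncl l hl n k (mem_support_iff.1 k.2))) := by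
  rw [extendM, pairing_finset_sum]
  refine Finset.sum_congr rfl fun k _ => ?_
  rw [pairing_finset_sum, pairing, Finsupp.sum, Finset.mul_sum]
  refine Finset.sum_congr rfl fun j _ => ?_
  rw [pairing_single]
  simp only [fiberIncl, fiberPt, ContinuousMap.comp_apply, ContinuousMap.coe_mk]
  ring

theorem continuous_extendM (l : K →₀ ℝ) (hl : l ∈ L) (n : ℕ) :
    Continuous (extendM L k0 l hl n) := by
  refine continuous_iff_pairing.2 fun f => ?_
  simp only [pairing_extendM]
  exact continuous_finsetSum _ fun k _ => continuous_const.mul (continuous_pairing _)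

theorem pairing_extendM_single_k0 (l : K →₀ ℝ) (hl : l ∈ L) (n : ℕ)
    (f : C(GlueSpace K Kn L k0, ℝ)) :
    pairing (extendM L k0 l hl n (single (k0 n) 1)) f = pairing l (f.comp baseIncl) := by
  rw [pairing_extendM, pairing_eq_sum_attach]
  refine Finset.sum_congr rfl fun k _ => ?_
  rw [pairing_single, one_mul]
  simp only [fiberIncl, ContinuousMap.comp_apply, ContinuousMap.coe_mk, fiberPt_k0]
  rfl

theorem abs_pairing_extendM_sub_le {f : C(GlueSpace K Kn L k0, ℝ)} {ε : ℝ} (hε : 0 ≤ ε)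
    {B : Finset ((K →₀ ℝ) × ℕ)}
    (hB : ∀ q : FiberPt K Kn L k0, (q.l, q.n) ∉ B → |f (Sum.inr q) - f (Sum.inl q.k)| ≤ ε)
    {l : K →₀ ℝ} (hl : l ∈ L) (hlp : IsProbabilityFinsupp l) {n : ℕ} {ln : Kn n →₀ ℝ}
    (hlnp : IsProbabilityFinsupp ln) (hlnB : (l, n) ∉ B) :
    |pairing (extendM L k0 l hl n ln) f - pairing l (f.comp baseIncl)| ≤ ε := by
  rw [pairing_extendM, pairing_eq_sum_attach, ← Finset.sum_sub_distrib]
  simp only [← mul_sub]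
  refine abs_sum_mul_le_of_abs_le (fun k _ => hlp.1 k) ?_ fun k _ => ?_
  · rw [Finset.sum_attach l.support l]
    exact hlp.2
  refine hlnp.abs_pairing_sub_le fun j _ => ?_
  by_cases hj : j = k0 n
  · subst hj
    simpa [fiberIncl] using hε
  · simpa [fiberIncl, fiberPt_of_ne hj] using hB _ hlnB

end Extension

theorem isCompact_range_of_forall_ultrafilter {α X : Type*} [TopologicalSpace X] {f : α → X}
    (h : ∀ 𝒱 : Ultrafilter α, ∃ a, Tendsto f 𝒱 (𝓝 (f a))) : IsCompact (range f) := by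
  refine isCompact_iff_ultrafilter_le_nhds.2 fun 𝒰 h𝒰 => ?_
  have himage : f '' univ ∈ 𝒰 := by rw [image_univ]; exact le_principal_iff.1 h𝒰
  obtain ⟨a, ha⟩ := h (Ultrafilter.ofComapInfPrincipal himage)
  refine ⟨f a, mem_range_self a, ?_⟩
  rwa [← Ultrafilter.ofComapInfPrincipal_eq_of_map himage, Ultrafilter.coe_map]

section Compactness

variable {K : Type*} {Kn : ℕ → Type*} {L : Set (K →₀ ℝ)} {k0 : ∀ n, Kn n}
  {Ln : ∀ n, Set (Kn n →₀ ℝ)}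

abbrev ExtParam (L : Set (K →₀ ℝ)) (Ln : ∀ n, Set (Kn n →₀ ℝ)) : Type _ := L × Σ n, Ln n

noncomputable def extendParam (k0 : ∀ n, Kn n) (p : ExtParam L Ln) :
    GlueSpace K Kn L k0 →₀ ℝ :=
  extendM L k0 p.1 p.1.2 p.2.1 p.2.2

theorem range_extendParam : range (extendParam (Ln := Ln) k0) = glueL' L k0 Ln := by
  ext μ
  constructor
  · rintro ⟨⟨⟨l, hl⟩, n, ln, hln⟩, rfl⟩
    exact ⟨l, hl, n, ln, hln, rfl⟩
  · rintro ⟨l, hl, n, ln, hln, rfl⟩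
    exact ⟨(⟨l, hl⟩, ⟨n, ⟨ln, hln⟩⟩), rfl⟩

variable [TopologicalSpace K] [∀ n, TopologicalSpace (Kn n)] [∀ n, T2Space (Kn n)]

theorem exists_tendsto_extendParam_of_eventually_eq (hLncpt : ∀ n, IsCompact (Ln n))
    (𝒱 : Ultrafilter (ExtParam L Ln)) {l : K →₀ ℝ} {n : ℕ}
    (h : ∀ᶠ p : ExtParam L Ln in 𝒱, (p.1.1, p.2.1) = (l, n)) :
    ∃ p : ExtParam L Ln,
      Tendsto (extendParam k0) (𝒱 : Filter (ExtParam L Ln)) (𝓝 (extendParam k0 p)) := by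
  obtain ⟨p₀, hp₀⟩ := h.exists
  have hl : l ∈ L := (Prod.mk.inj hp₀).1 ▸ p₀.1.2
  have hmem : ∀ᶠ p : ExtParam L Ln in 𝒱, extendParam k0 p ∈ extendM L k0 l hl n '' Ln n := by
    filter_upwards [h] with ⟨⟨l', hl'⟩, n', ln, hln⟩ hp
    obtain ⟨rfl, rfl⟩ := Prod.mk.inj hp
    exact ⟨ln, hln, rfl⟩
  obtain ⟨_, ⟨ln, hln, rfl⟩, hlim⟩ :=
    ((hLncpt n).image (continuous_extendM l hl n)).ultrafilter_le_nhds _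
      (le_principal_iff.2 (Ultrafilter.mem_map.2 hmem))
  exact ⟨(⟨l, hl⟩, ⟨n, ⟨ln, hln⟩⟩), hlim⟩

theorem tendsto_pairing_extendParam_sub [CompactSpace K]
    (hLprob : ∀ l ∈ L, IsProbabilityFinsupp l)
    (hLnprob : ∀ n, ∀ ln ∈ Ln n, IsProbabilityFinsupp ln) (f : C(GlueSpace K Kn L k0, ℝ)) :
    Tendsto (fun p => pairing (extendParam k0 p) f - pairing p.1.1 (f.comp baseIncl))
      (comap (fun p : ExtParam L Ln => (p.1.1, p.2.1)) cofinite) (𝓝 0) := by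
  refine Metric.tendsto_nhds.2 fun ε hε => ?_
  obtain ⟨B, hB⟩ := exists_finset_abs_sub_le f (half_pos hε)
  filter_upwards [preimage_mem_comap B.finite_toSet.compl_mem_cofinite]
    with ⟨⟨l, hl⟩, n, ln, hln⟩ hlnB
  rw [Real.dist_eq, sub_zero]
  exact (abs_pairing_extendM_sub_le (half_pos hε).le hB hl (hLprob l hl) (hLnprob n ln hln)
    hlnB).trans_lt (half_lt_self hε)

theorem exists_tendsto_extendParam_of_tendsto_cofinite [CompactSpace K]
    (hLprob : ∀ l ∈ L, IsProbabilityFinsupp l)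
    (hLnprob : ∀ n, ∀ ln ∈ Ln n, IsProbabilityFinsupp ln) (hLcpt : IsCompact L)
    (𝒱 : Ultrafilter (ExtParam L Ln))
    (h : Tendsto (fun p : ExtParam L Ln => (p.1.1, p.2.1)) 𝒱 cofinite) :
    ∃ (l : K →₀ ℝ) (hl : l ∈ L),
      Tendsto (extendParam k0) (𝒱 : Filter (ExtParam L Ln))
        (𝓝 (extendM L k0 l hl 0 (single (k0 0) 1))) := by
  have hmap : ↑(𝒱.map fun p : ExtParam L Ln => (p.1 : K →₀ ℝ)) ≤ 𝓟 L :=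
    le_principal_iff.2 (Ultrafilter.mem_map.2 (univ_mem' fun p => p.1.2))
  obtain ⟨l, hl, hlim⟩ := hLcpt.ultrafilter_le_nhds _ hmap
  refine ⟨l, hl, tendsto_nhds_iff_pairing.2 fun f => ?_⟩
  rw [pairing_extendM_single_k0, ← zero_add (pairing l _)]
  refine ((tendsto_pairing_extendParam_sub hLprob hLnprob f).comp (tendsto_comap_iff.2 h)).add
    (((continuous_pairing _).tendsto l).comp hlim) |>.congr fun p => ?_
  simp

end Compactness

theorem stmt15_general {K : Type*} [TopologicalSpace K] [CompactSpace K]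
    {Kn : ℕ → Type*} [∀ n, TopologicalSpace (Kn n)]
    [∀ n, T2Space (Kn n)]
    (L : Set (K →₀ ℝ)) (k0 : ∀ n, Kn n) (Ln : ∀ n, Set (Kn n →₀ ℝ))
    (hLprob : ∀ l ∈ L, (∀ x, 0 ≤ l x) ∧ (l.sum fun _ c => c) = 1)
    (hLnprob : ∀ n, ∀ ln ∈ Ln n, (∀ x, 0 ≤ ln x) ∧ (ln.sum fun _ c => c) = 1)
    (hδ : ∀ n, Finsupp.single (k0 n) (1 : ℝ) ∈ Ln n)
    (hLcpt : IsCompact L) (hLncpt : ∀ n, IsCompact (Ln n)) :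
    IsCompact (glueL' L k0 Ln) := by
  rw [← range_extendParam]
  refine isCompact_range_of_forall_ultrafilter fun 𝒱 => ?_
  rcases (𝒱.map fun p => (p.1.1, p.2.1)).le_cofinite_or_eq_pure with hcof | ⟨⟨l, n⟩, hpure⟩
  · obtain ⟨l, hl, hlim⟩ :=
      exists_tendsto_extendParam_of_tendsto_cofinite hLprob hLnprob hLcpt 𝒱 hcof
    exact ⟨(⟨l, hl⟩, ⟨0, ⟨_, hδ 0⟩⟩), hlim⟩
  · exact exists_tendsto_extendParam_of_eventually_eq hLncpt 𝒱
      (Ultrafilter.mem_map.1 (hpure ▸ Ultrafilter.mem_pure.2 (mem_singleton (l, n))))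

/-- Lemma 1(6) of the paper: if `L` and all `Ln n` are weak*-compact sets of purely atomic
finitely supported probability measures with `δ_{k_{n,0}} ∈ Ln n`, then the extended set
`L′` is weak*-compact. -/
theorem stmt15 {K : Type*} [TopologicalSpace K] [CompactSpace K] [T2Space K]
    {Kn : ℕ → Type*} [∀ n, TopologicalSpace (Kn n)] [∀ n, CompactSpace (Kn n)]
    [∀ n, T2Space (Kn n)]
    (L : Set (K →₀ ℝ)) (k0 : ∀ n, Kn n) (Ln : ∀ n, Set (Kn n →₀ ℝ))
    (hLprob : ∀ l ∈ L, (∀ x, 0 ≤ l x) ∧ (l.sum fun _ c => c) = 1)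
    (hLnprob : ∀ n, ∀ ln ∈ Ln n, (∀ x, 0 ≤ ln x) ∧ (ln.sum fun _ c => c) = 1)
    (hδ : ∀ n, Finsupp.single (k0 n) (1 : ℝ) ∈ Ln n)
    (hLcpt : IsCompact L) (hLncpt : ∀ n, IsCompact (Ln n)) :
    IsCompact (glueL' L k0 Ln) :=
  stmt15_general L k0 Ln hLprob hLnprob hδ hLcpt hLncpt
end

section
/- (Wolfe index upper bound.) For each α < ω₁ write α = β + η where η < ω^{ζ+1} and β is the smallest ordinal admitting such a decomposition. Then ρ(ε, α) ≤ β + ω^ζ·l + η whenever 2^{-(l+1)} < ε ≤ 2^{-l}, l = 0,1,2,…, where ρ(ε,α) = sup{γ : P_γ(ε, L_α) ≠ ∅} for the spaces (K_α, L_α) built over ζ. -/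
open Ordinal

/-!
Write `α = ω^(ζ+1)·q + r` with `r < ω^(ζ+1)`; the minimal decomposition is `β = ω^(ζ+1)·q`,
`η = r`. The bound `B_l(α) = ω^(ζ+1)·q + ω^ζ·l + r` is monotone in `α`, satisfies
`B_l(γ + 1) = B_l(γ) + 1`, and `B_k(γ) + ω^ζ ≤ B_{k+1}(γ)`, because `r + ω^ζ ≤ ω^ζ + r` for
`r < ω^(ζ+1)`. We prove `ρ(ε, α) ≤ B_l(α)` under the weaker hypothesis `2^{-(l+1)} < ε`, by
transfinite induction on `α` for all `l` at once: at a successor the recursion doubles `ε`, which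
lowers `l` by one and costs exactly `ω^ζ`; at a limit, continuity of `ρ` and monotonicity of `B_l`
suffice.
-/

namespace Ordinal

section DivMod

variable {a b c d : Ordinal}

theorem add_div_of_isPrincipal_add (hb : IsPrincipal (· + ·) b) (hc : c < b) :
    (a + c) / b = a / b := by
  have hb0 : b ≠ 0 := (zero_le.trans_lt hc).ne'
  have h : a + c = b * (a / b) + (a % b + c) := by rw [← add_assoc, div_add_mod]
  rw [h, mul_add_div _ hb0, div_eq_zero_of_lt (hb (mod_lt a hb0) hc), add_zero]

theorem add_mod_of_isPrincipal_add (hb : IsPrincipal (· + ·) b) (hc : c < b) :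
    (a + c) % b = a % b + c := by
  have hb0 : b ≠ 0 := (zero_le.trans_lt hc).ne'
  have h : a + c = b * (a / b) + (a % b + c) := by rw [← add_assoc, div_add_mod]
  rw [h, mul_add_mod_self, mod_eq_of_lt (hb (mod_lt a hb0) hc)]

theorem monotone_mul_div_add_add_mod (hb : IsPrincipal (· + ·) b) (hc : c < b) :
    Monotone fun a ↦ b * (a / b) + c + a % b := by
  have hb0 : b ≠ 0 := (zero_le.trans_lt hc).ne'
  intro x y hxy
  dsimp only
  rcases (div_le_left hxy b).lt_or_eq with hlt | heq
  · refine le_of_lt ?_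
    calc b * (x / b) + c + x % b < b * (x / b) + b := by
          rw [add_assoc]; exact add_lt_add_right (hb hc (mod_lt x hb0)) _
      _ = b * (x / b + 1) := (mul_add_one _ _).symm
      _ ≤ b * (y / b) := mul_le_mul_right (Order.add_one_le_of_lt hlt) _
      _ ≤ b * (y / b) + c + y % b := by rw [add_assoc]; exact le_self_add
  · have hmod : x % b ≤ y % b := by
      rwa [← div_add_mod x b, ← div_add_mod y b, heq, add_le_add_iff_left] at hxy
    rw [heq]
    exact add_le_add_right hmod _

theorem eq_mul_div_and_eq_mod_of_minimal (hb : IsPrincipal (· + ·) b) (hc : c < b)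
    (ha : a = d + c) (hmin : ∀ d' c', c' < b → a = d' + c' → d ≤ d') :
    d = b * (a / b) ∧ c = a % b := by
  have hb0 : b ≠ 0 := (zero_le.trans_lt hc).ne'
  have hd : d = b * (a / b) := by
    refine le_antisymm (hmin _ _ (mod_lt a hb0) (div_add_mod a b).symm) ?_
    rw [ha, add_div_of_isPrincipal_add hb hc]
    exact mul_div_le d b
  refine ⟨hd, add_left_cancel (a := d) ?_⟩
  rw [← ha, hd, div_add_mod]

end DivMod

theorem opow_mul_natCast_lt_opow_add_one (ζ : Ordinal) (l : ℕ) : ω ^ ζ * l < ω ^ (ζ + 1) := by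
  rw [opow_add_one]
  exact (mul_lt_mul_iff_right₀ (opow_pos ζ omega0_pos)).2 (natCast_lt_omega0 l)

theorem add_opow_le_opow_add {ζ r : Ordinal} (hr : r < ω ^ (ζ + 1)) :
    r + ω ^ ζ ≤ ω ^ ζ + r := by
  have h0 : ω ^ ζ ≠ 0 := opow_ne_zero _ omega0_ne_zero
  obtain ⟨n, hn⟩ : ∃ n : ℕ, r / ω ^ ζ = n :=
    lt_omega0.1 ((lt_mul_iff_div_lt h0).1 (by rwa [← opow_add_one]))
  have hr : r = ω ^ ζ * n + r % ω ^ ζ := by rw [← hn, div_add_mod]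
  calc r + ω ^ ζ = ω ^ ζ * n + ω ^ ζ := by
        rw [hr, add_assoc, add_omega0_opow (mod_lt r h0)]
    _ = ω ^ ζ + ω ^ ζ * n := by
        rw [← mul_add_one, ← mul_one_add]
        norm_cast
        rw [add_comm]
    _ ≤ ω ^ ζ + r := by
        rw [hr, ← add_assoc]; exact le_self_add

theorem exists_strictMono_nat_iSup_eq {α : Ordinal} (hc : α.card ≤ Cardinal.aleph0)
    (hl : Order.IsSuccLimit α) : ∃ g : ℕ → Ordinal, StrictMono g ∧ ⨆ n, g n = α ∧ ∀ n, 0 < g n := by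
  have hcof : α.cof.ord = ω := by
    rw [le_antisymm ((cof_le_card α).trans hc) (aleph0_le_cof_iff.2 (one_lt_cof_iff.2 hl)),
      Cardinal.ord_aleph0]
  obtain ⟨f, hf⟩ := exists_isFundamentalSeq hcof
  let e : ℕ → Set.Iio ω := fun n ↦ ⟨n, natCast_lt_omega0 n⟩
  have he : StrictMono e := fun _ _ h ↦ Subtype.mk_lt_mk.2 (Nat.cast_lt.2 h)
  let g : ℕ → Ordinal := fun n ↦ (f (e (n + 1))).1
  have hg : StrictMono g := fun m n h ↦ hf.strictMono (he (Nat.succ_lt_succ h))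
  refine ⟨g, hg, le_antisymm (Ordinal.iSup_le fun n ↦ (f _).2.le) ?_, fun n ↦ ?_⟩
  · rw [← hf.iSup_eq one_lt_omega0]
    refine Ordinal.iSup_le fun ⟨i, hi⟩ ↦ ?_
    obtain ⟨m, rfl⟩ := lt_omega0.1 hi
    exact (Subtype.coe_le_coe.2 (hf.strictMono.monotone (he.monotone m.le_succ))).trans
      (Ordinal.le_iSup g m)
  · exact zero_le.trans_lt (Subtype.coe_lt_coe.2 (hf.strictMono (he n.succ_pos)))

end Ordinal

noncomputable def wolfeBound (ζ : Ordinal) (l : ℕ) (α : Ordinal) : Ordinal :=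
  ω ^ (ζ + 1) * (α / ω ^ (ζ + 1)) + ω ^ ζ * l + α % ω ^ (ζ + 1)

section WolfeBound

variable (ζ : Ordinal) (l : ℕ)

theorem wolfeBound_mono : Monotone (wolfeBound ζ l) :=
  monotone_mul_div_add_add_mod (isPrincipal_add_omega0_opow _)
    (opow_mul_natCast_lt_opow_add_one ζ l)

theorem wolfeBound_add_one (γ : Ordinal) : wolfeBound ζ l (γ + 1) = wolfeBound ζ l γ + 1 := by
  have h1 : 1 < ω ^ (ζ + 1) := one_lt_omega0.trans_le (left_le_opow _ (by simp))
  rw [wolfeBound, add_div_of_isPrincipal_add (isPrincipal_add_omega0_opow _) h1,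
    add_mod_of_isPrincipal_add (isPrincipal_add_omega0_opow _) h1, ← add_assoc, wolfeBound]

theorem opow_mul_le_wolfeBound (α : Ordinal) : ω ^ ζ * l ≤ wolfeBound ζ l α :=
  le_add_self.trans le_self_add

theorem wolfeBound_add_opow_le (γ : Ordinal) :
    wolfeBound ζ l γ + ω ^ ζ ≤ wolfeBound ζ (l + 1) γ := by
  simp only [wolfeBound, add_assoc]
  refine add_le_add_right ?_ _
  calc ω ^ ζ * l + (γ % ω ^ (ζ + 1) + ω ^ ζ) ≤ ω ^ ζ * l + (ω ^ ζ + γ % ω ^ (ζ + 1)) :=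
        add_le_add_right (add_opow_le_opow_add (mod_lt _ (opow_ne_zero _ omega0_ne_zero))) _
    _ = ω ^ ζ * ((l + 1 : ℕ) : Ordinal) + γ % ω ^ (ζ + 1) := by
        rw [← add_assoc, Nat.cast_add_one, mul_add_one]

end WolfeBound

theorem exists_eq_add_one_of_le_half {l : ℕ} {ε : ℝ} (hε : (1 / 2 : ℝ) ^ (l + 1) < ε)
    (hle : ε ≤ 1 / 2) : ∃ k, l = k + 1 :=
  Nat.exists_eq_succ_of_ne_zero fun hl ↦ by subst hl; norm_num at hε; linarith

/-- The estimates of Lemma 4 on the index `ρ ε α` of the spaces `(K_α, L_α)` built over `ζ`. -/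
structure WolfeRecursion (ζ : Ordinal) (ρ : ℝ → Ordinal → Ordinal) : Prop where
  one_of_le_half : ∀ ε : ℝ, 0 < ε → ε ≤ 1 / 2 → ρ ε 1 = ω ^ ζ
  one_of_half_lt : ∀ ε : ℝ, 1 / 2 < ε → ρ ε 1 = 0
  add_one_le : ∀ ε : ℝ, 0 < ε → ∀ β : Ordinal,
    ρ ε (β + 1) ≤ max (ρ (2 * ε) β + ρ ε 1) (ρ ε β + 1)
  limit : ∀ ε : ℝ, 0 < ε → ∀ (β : Ordinal) (βs : ℕ → Ordinal),
    StrictMono βs → ⨆ n, βs n = β → ρ ε β = ⨆ n, ρ ε (βs n)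

namespace WolfeRecursion

variable {ζ : Ordinal} {ρ : ℝ → Ordinal → Ordinal}

theorem rho_one_le (h : WolfeRecursion ζ ρ) {l : ℕ} {ε : ℝ} (hε : (1 / 2 : ℝ) ^ (l + 1) < ε) :
    ρ ε 1 ≤ ω ^ ζ * l := by
  rcases le_or_gt ε (1 / 2) with hle | hlt
  · obtain ⟨k, rfl⟩ := exists_eq_add_one_of_le_half hε hle
    rw [h.one_of_le_half ε ((by positivity : (0 : ℝ) < _).trans hε) hle]
    exact le_mul_left _ (by exact_mod_cast k.succ_pos)
  · rw [h.one_of_half_lt ε hlt]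
    exact zero_le

theorem rho_add_one_le (h : WolfeRecursion ζ ρ) {γ : Ordinal}
    (ih : ∀ (l : ℕ) (ε : ℝ), (1 / 2 : ℝ) ^ (l + 1) < ε → ρ ε γ ≤ wolfeBound ζ l γ)
    {l : ℕ} {ε : ℝ} (hε : (1 / 2 : ℝ) ^ (l + 1) < ε) :
    ρ ε (γ + 1) ≤ wolfeBound ζ l (γ + 1) := by
  have hε0 : 0 < ε := (by positivity : (0 : ℝ) < _).trans hε
  have hγ : wolfeBound ζ l γ ≤ wolfeBound ζ l (γ + 1) := wolfeBound_mono ζ l le_self_add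
  refine (h.add_one_le ε hε0 γ).trans (max_le ?_ ?_)
  · rcases le_or_gt ε (1 / 2) with hle | hlt
    · obtain ⟨k, rfl⟩ := exists_eq_add_one_of_le_half hε hle
      have h2ε : (1 / 2 : ℝ) ^ (k + 1) < 2 * ε := by rw [pow_succ] at hε; linarith
      rw [h.one_of_le_half ε hε0 hle]
      calc ρ (2 * ε) γ + ω ^ ζ ≤ wolfeBound ζ k γ + ω ^ ζ := add_le_add_left (ih k _ h2ε) _
        _ ≤ wolfeBound ζ (k + 1) γ := wolfeBound_add_opow_le ζ k γ
        _ ≤ wolfeBound ζ (k + 1) (γ + 1) := hγ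
    · have h2ε : (1 / 2 : ℝ) ^ (l + 1) < 2 * ε := by linarith
      rw [h.one_of_half_lt ε hlt, add_zero]
      exact (ih l _ h2ε).trans hγ
  · rw [wolfeBound_add_one]
    exact add_le_add_left (ih l ε hε) 1

theorem rho_le_of_isSuccLimit (h : WolfeRecursion ζ ρ) {α : Ordinal}
    (hc : α.card ≤ Cardinal.aleph0) (hl : Order.IsSuccLimit α)
    (ih : ∀ γ < α, 0 < γ → ∀ (l : ℕ) (ε : ℝ), (1 / 2 : ℝ) ^ (l + 1) < ε →
      ρ ε γ ≤ wolfeBound ζ l γ)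
    {l : ℕ} {ε : ℝ} (hε : (1 / 2 : ℝ) ^ (l + 1) < ε) : ρ ε α ≤ wolfeBound ζ l α := by
  obtain ⟨g, hg, hsup, hpos⟩ := exists_strictMono_nat_iSup_eq hc hl
  have hlt : ∀ n, g n < α := fun n ↦ hsup ▸ (hg n.lt_succ_self).trans_le (Ordinal.le_iSup g _)
  rw [h.limit ε ((by positivity : (0 : ℝ) < _).trans hε) α g hg hsup]
  exact Ordinal.iSup_le fun n ↦
    (ih _ (hlt n) (hpos n) l ε hε).trans (wolfeBound_mono ζ l (hlt n).le)

theorem rho_le_wolfeBound (h : WolfeRecursion ζ ρ) (α : Ordinal) :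
    α.card ≤ Cardinal.aleph0 → 0 < α → ∀ (l : ℕ) (ε : ℝ), (1 / 2 : ℝ) ^ (l + 1) < ε →
      ρ ε α ≤ wolfeBound ζ l α := by
  induction α using Ordinal.limitRecOn with
  | zero => exact fun _ h0 ↦ absurd h0 (lt_irrefl 0)
  | add_one γ ih =>
    intro hc _ l ε hε
    rcases eq_zero_or_pos γ with rfl | hγ
    · rw [zero_add]
      exact (h.rho_one_le hε).trans (opow_mul_le_wolfeBound ζ l 1)
    · exact h.rho_add_one_le (ih ((card_le_card le_self_add).trans hc) hγ) hε
  | limit α hl ih =>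
    exact fun hc _ l ε hε ↦ h.rho_le_of_isSuccLimit hc hl
      (fun γ hγ ↦ ih γ hγ ((card_le_card hγ.le).trans hc)) hε

end WolfeRecursion

theorem stmt19_general (ζ : Ordinal)
    (ρ : ℝ → Ordinal → Ordinal)
    (hone : ∀ ε : ℝ, 0 < ε → ε ≤ 1 / 2 → ρ ε 1 = ω ^ ζ)
    (hone' : ∀ ε : ℝ, 1 / 2 < ε → ρ ε 1 = 0)
    (hsucc : ∀ (ε : ℝ), 0 < ε → ∀ β : Ordinal,
      ρ ε (β + 1) ≤ max (ρ (2 * ε) β + ρ ε 1) (ρ ε β + 1))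
    (hlim : ∀ (ε : ℝ), 0 < ε → ∀ (β : Ordinal) (βs : ℕ → Ordinal),
      StrictMono βs → (⨆ n, βs n) = β → ρ ε β = ⨆ n, ρ ε (βs n)) :
    ∀ (α β η : Ordinal), α.card ≤ Cardinal.aleph0 → 1 ≤ α →
      η < ω ^ (ζ + 1) → α = β + η →
      (∀ β' η' : Ordinal, η' < ω ^ (ζ + 1) → α = β' + η' → β ≤ β') →
      ∀ (l : ℕ) (ε : ℝ), ((1 : ℝ) / 2) ^ (l + 1) < ε → ε ≤ ((1 : ℝ) / 2) ^ l →
        ρ ε α ≤ β + ω ^ ζ * l + η := by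
  intro α β η hcard hα hη hdec hmin l ε hε _
  obtain ⟨rfl, rfl⟩ :=
    eq_mul_div_and_eq_mod_of_minimal (isPrincipal_add_omega0_opow _) hη hdec hmin
  exact WolfeRecursion.rho_le_wolfeBound ⟨hone, hone', hsucc, hlim⟩ α hcard
    (Order.one_le_iff_pos.1 hα) l ε hε

/-- The Wolfe-index upper bound (second Proposition of the paper): if
`ρ : ℝ → Ordinal → Ordinal` satisfies the recursions of Lemma 4 for the family
`(K_α, L_α)` built over `ζ` (`ρ(ε,1) = ω^ζ` for `0 < ε ≤ ½`, `ρ(ε,1) = 0` for `ε > ½`,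
`ρ(ε,β+1) ≤ max(ρ(2ε,β) + ρ(ε,1), ρ(ε,β) + 1)`, and continuity along increasing
sequences at limits), then for every countable `α ≥ 1` with minimal decomposition
`α = β + η`, `η < ω^{ζ+1}`, one has `ρ(ε, α) ≤ β + ω^ζ·l + η` whenever
`2^{-(l+1)} < ε ≤ 2^{-l}`. -/
theorem stmt19 (ζ : Ordinal) (hζ1 : 1 ≤ ζ) (hζ : ζ.card ≤ Cardinal.aleph0)
    (ρ : ℝ → Ordinal → Ordinal)
    (hone : ∀ ε : ℝ, 0 < ε → ε ≤ 1 / 2 → ρ ε 1 = ω ^ ζ)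
    (hone' : ∀ ε : ℝ, 1 / 2 < ε → ρ ε 1 = 0)
    (hsucc : ∀ (ε : ℝ), 0 < ε → ∀ β : Ordinal,
      ρ ε (β + 1) ≤ max (ρ (2 * ε) β + ρ ε 1) (ρ ε β + 1))
    (hlim : ∀ (ε : ℝ), 0 < ε → ∀ (β : Ordinal) (βs : ℕ → Ordinal),
      StrictMono βs → (⨆ n, βs n) = β → ρ ε β = ⨆ n, ρ ε (βs n)) :
    ∀ (α β η : Ordinal), α.card ≤ Cardinal.aleph0 → 1 ≤ α →
      η < ω ^ (ζ + 1) → α = β + η →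
      (∀ β' η' : Ordinal, η' < ω ^ (ζ + 1) → α = β' + η' → β ≤ β') →
      ∀ (l : ℕ) (ε : ℝ), ((1 : ℝ) / 2) ^ (l + 1) < ε → ε ≤ ((1 : ℝ) / 2) ^ l →
        ρ ε α ≤ β + ω ^ ζ * l + η :=
  stmt19_general ζ ρ hone hone' hsucc hlim
end
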